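/- arXiv:2209.01502 — 9 statements merged into one kernel-verified Lean document; each statement's English description precedes it below -/
import Mathlib

section
/- For any positive integer k and any real number α, the k×k matrix with entries M(i,j) = (α)_{i+j} / (i!·j!) for 0 ≤ i,j ≤ k−1 (where (α)_n = α(α+1)···(α+n−1) is the rising factorial) has determinant det M = ∏_{i=0}^{k−1} (α)_i / i!. -/
open Polynomial Matrix

theorem stmt_0 (k : ℕ) (hk : 0 < k) (α : ℝ) :
    Matrix.det (Matrix.of fun i j : Fin k =>
      (ascPochhammer ℝ (i.1 + j.1)).eval α /
        ((Nat.factorial i.1 : ℝ) * (Nat.factorial j.1 : ℝ))) =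
    ∏ i : Fin k, (ascPochhammer ℝ i.1).eval α / (Nat.factorial i.1 : ℝ) := by
  obtain ⟨n, rfl⟩ := Nat.exists_eq_succ_of_ne_zero hk.ne'
  have key : (Matrix.of fun i j : Fin (n+1) =>
      (ascPochhammer ℝ (i.1 + j.1)).eval α /
        ((Nat.factorial i.1 : ℝ) * (Nat.factorial j.1 : ℝ))) =
      Matrix.diagonal (fun i : Fin (n+1) => (ascPochhammer ℝ i.1).eval α / (Nat.factorial i.1 : ℝ)) *
        (Matrix.of fun i j : Fin (n+1) =>
          (((ascPochhammer ℝ j.1).comp (X + C α)).eval ((i : ℕ) : ℝ))) *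
        Matrix.diagonal (fun j : Fin (n+1) => ((Nat.factorial j.1 : ℝ))⁻¹) := by
    ext i j
    rw [Matrix.mul_diagonal, Matrix.diagonal_mul, Matrix.of_apply, Matrix.of_apply]
    have h := congrArg (Polynomial.eval α) (ascPochhammer_mul (S := ℝ) i.1 j.1)
    rw [eval_mul, eval_comp, eval_add, eval_X, eval_natCast] at h
    have hc : ((ascPochhammer ℝ j.1).comp (X + C α)).eval ((i : ℕ) : ℝ)
        = (ascPochhammer ℝ j.1).eval (α + (i.1 : ℝ)) := by
      rw [eval_comp, eval_add, eval_X, eval_C, add_comm]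
    rw [hc, ← h]
    have hi : (Nat.factorial i.1 : ℝ) ≠ 0 := Nat.cast_ne_zero.mpr (Nat.factorial_ne_zero _)
    have hj : (Nat.factorial j.1 : ℝ) ≠ 0 := Nat.cast_ne_zero.mpr (Nat.factorial_ne_zero _)
    field_simp
  rw [key, Matrix.det_mul, Matrix.det_mul, Matrix.det_diagonal, Matrix.det_diagonal]
  have hvdm : (Matrix.of fun i j : Fin (n+1) =>
      (((ascPochhammer ℝ j.1).comp (X + C α)).eval ((i : ℕ) : ℝ))).det
      = (Nat.superFactorial n : ℝ) := by
    have hdeg : ∀ j : Fin (n+1),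
        ((ascPochhammer ℝ j.1).comp (X + C α)).natDegree = j.1 := fun j => by
      rw [natDegree_comp, ascPochhammer_natDegree, natDegree_X_add_C, mul_one]
    have hmon : ∀ j : Fin (n+1), ((ascPochhammer ℝ j.1).comp (X + C α)).Monic := fun j =>
      (monic_ascPochhammer ℝ j.1).comp (monic_X_add_C α)
        (by rw [natDegree_X_add_C]; exact one_ne_zero)
    rw [← Matrix.det_eval_matrixOfPolynomials_eq_det_vandermonde
        (fun i : Fin (n+1) => ((i : ℕ) : ℝ))
        (fun j : Fin (n+1) => (ascPochhammer ℝ j.1).comp (X + C α)) hdeg hmon]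
    exact Matrix.det_vandermonde_id_eq_superFactorial n
  rw [hvdm]
  have hsf : (Nat.superFactorial n : ℝ) = ∏ j : Fin (n+1), (Nat.factorial j.1 : ℝ) := by
    rw [← Nat.prod_range_succ_factorial n, Nat.cast_prod,
      Fin.prod_univ_eq_prod_range (fun x => ((Nat.factorial x : ℝ)))]
  rw [hsf, Finset.prod_inv_distrib]
  have hne : (∏ j : Fin (n+1), (Nat.factorial j.1 : ℝ)) ≠ 0 :=
    Finset.prod_ne_zero_iff.mpr fun j _ => Nat.cast_ne_zero.mpr (Nat.factorial_ne_zero _)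
  field_simp
end

section
/- For every positive integer k, the k×k matrix with entries M(i,j) = (i+j+1)·binomial(i+j, i) for 0 ≤ i,j ≤ k−1 has determinant equal to k! (the factorial of k). -/
open Finset

lemma key_nat (i j : ℕ) :
    ∑ m ∈ range (i + 1), (m + 1) * Nat.choose (i + 1) (m + 1) * Nat.choose (j + 1) (m + 1)
      = (i + j + 1) * Nat.choose (i + j) i := by
  have h1 : ∀ m, (m + 1) * Nat.choose (j + 1) (m + 1) = (j + 1) * Nat.choose j m := by
    intro m
    rw [mul_comm (m+1), ← Nat.add_one_mul_choose_eq]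
  calc ∑ m ∈ range (i + 1), (m + 1) * Nat.choose (i + 1) (m + 1) * Nat.choose (j + 1) (m + 1)
      = ∑ m ∈ range (i + 1), Nat.choose (i + 1) (m + 1) * ((j + 1) * Nat.choose j m) := by
        apply Finset.sum_congr rfl; intro m _
        rw [← h1 m]; ring
    _ = (j + 1) * ∑ m ∈ range (i + 1), Nat.choose (i + 1) (i - m) * Nat.choose j m := by
        rw [Finset.mul_sum]
        apply Finset.sum_congr rfl; intro m hm
        rw [Finset.mem_range] at hm
        have : Nat.choose (i + 1) (m + 1) = Nat.choose (i + 1) (i - m) := by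
          rw [← Nat.choose_symm (by omega : m + 1 ≤ i + 1)]
          congr 1; omega
        rw [this]; ring
    _ = (j + 1) * Nat.choose (i + 1 + j) i := by
        congr 1
        rw [Nat.add_choose_eq]
        rw [Finset.Nat.sum_antidiagonal_eq_sum_range_succ
          (f := fun a b => Nat.choose (i+1) a * Nat.choose j b)]
        rw [← Finset.sum_range_reflect (fun m => Nat.choose (i+1) m * Nat.choose j (i - m)) (i+1)]
        apply Finset.sum_congr rfl; intro m hm
        rw [Finset.mem_range] at hm
        congr 2 <;> omega
    _ = (i + j + 1) * Nat.choose (i + j) i := by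
        have h3 : Nat.choose (i + j) j = Nat.choose (i + j) i := by
          rw [← Nat.choose_symm (Nat.le_add_left j i)]
          congr 1; omega
        have h4 : Nat.choose (i + 1 + j) i = Nat.choose (i + j + 1) (j + 1) := by
          rw [show i + 1 + j = i + j + 1 by ring, ← Nat.choose_symm (by omega : i ≤ i + j + 1)]
          congr 1; omega
        rw [h4, mul_comm (j+1), ← Nat.add_one_mul_choose_eq, h3]

theorem stmt_3 (k : ℕ) (hk : 0 < k) :
    Matrix.det (Matrix.of fun i j : Fin k =>
      ((i.1 + j.1 + 1 : ℤ) * (Nat.choose (i.1 + j.1) i.1 : ℤ))) =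
    (Nat.factorial k : ℤ) := by
  set L : Matrix (Fin k) (Fin k) ℤ :=
    Matrix.of fun i m : Fin k => (Nat.choose (i.1 + 1) (m.1 + 1) : ℤ) with hL
  set U : Matrix (Fin k) (Fin k) ℤ :=
    Matrix.of fun m j : Fin k => ((m.1 + 1 : ℤ)) * (Nat.choose (j.1 + 1) (m.1 + 1) : ℤ) with hU
  have hM : (Matrix.of fun i j : Fin k =>
      ((i.1 + j.1 + 1 : ℤ) * (Nat.choose (i.1 + j.1) i.1 : ℤ))) = L * U := by
    ext i j
    simp only [Matrix.mul_apply, Matrix.of_apply, hL, hU]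
    have hsum : ∑ m : Fin k, (Nat.choose (i.1 + 1) (m.1 + 1) : ℤ) *
        ((m.1 + 1 : ℤ) * (Nat.choose (j.1 + 1) (m.1 + 1) : ℤ)) =
        ∑ m ∈ range (i.1 + 1),
          ((m + 1) * Nat.choose (i.1 + 1) (m + 1) * Nat.choose (j.1 + 1) (m + 1) : ℕ) := by
      rw [Fin.sum_univ_eq_sum_range
        (fun m => (Nat.choose (i.1 + 1) (m + 1) : ℤ) *
          ((m + 1 : ℤ) * (Nat.choose (j.1 + 1) (m + 1) : ℤ))), Nat.cast_sum]
      calc ∑ m ∈ range k, (Nat.choose (i.1 + 1) (m + 1) : ℤ) *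
              ((m + 1 : ℤ) * (Nat.choose (j.1 + 1) (m + 1) : ℤ))
          = ∑ m ∈ range k,
              (((m + 1) * Nat.choose (i.1 + 1) (m + 1) * Nat.choose (j.1 + 1) (m + 1) : ℕ) : ℤ) := by
            apply Finset.sum_congr rfl; intro m _; push_cast; ring
        _ = _ := by
            apply (Finset.sum_subset (Finset.range_subset_range.mpr i.2) ?_).symm
            intro m _ hm
            rw [Finset.mem_range, not_lt] at hm
            rw [Nat.choose_eq_zero_of_lt (by omega)]
            simp
    rw [hsum, key_nat i.1 j.1]
    push_cast; ring
  rw [hM, Matrix.det_mul]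
  have hdetL : L.det = 1 := by
    rw [Matrix.det_of_lowerTriangular L (by
      intro i j hij
      simp only [hL, Matrix.of_apply]
      rw [Nat.choose_eq_zero_of_lt (by simpa using hij)]
      simp)]
    apply Finset.prod_eq_one
    intro i _
    simp [hL]
  have hdetU : U.det = (Nat.factorial k : ℤ) := by
    rw [Matrix.det_of_upperTriangular (by
      intro i j hij
      simp only [hU, Matrix.of_apply]
      rw [Nat.choose_eq_zero_of_lt (by simpa using hij)]
      simp)]
    have : ∀ m : Fin k, U m m = ((m.1 + 1 : ℕ) : ℤ) := by
      intro m; simp [hU]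
    rw [Finset.prod_congr rfl (fun m _ => this m),
      Fin.prod_univ_eq_prod_range (fun m => ((m + 1 : ℕ) : ℤ)), ← Nat.cast_prod,
      Finset.prod_range_add_one_eq_factorial]
  rw [hdetL, hdetU, one_mul]
end

section
/- For all nonnegative integers i, j and any real α, the following identity of polynomials in α holds: ( ∑_{s=0}^{i} (−1)^s · binomial(i,s) · (α+i−s)_j ) · (α+j)_i = (j−i+1)_i · (α+i)_j, where (x)_n denotes the rising factorial. -/
open Polynomial Finset

/-- One-step finite difference of the rising factorial. -/
lemma asc_diff (m : ℕ) (y : ℝ) :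
    (ascPochhammer ℝ m).eval (y + 1) - (ascPochhammer ℝ m).eval y =
      (m : ℝ) * (ascPochhammer ℝ (m - 1)).eval (y + 1) := by
  cases m with
  | zero => simp
  | succ k =>
    have h1 : (ascPochhammer ℝ (k + 1)).eval (y + 1) =
        (ascPochhammer ℝ k).eval (y + 1) * (y + 1 + k) := by
      simp [ascPochhammer_succ_right]
    have h2 : (ascPochhammer ℝ (k + 1)).eval y =
        y * (ascPochhammer ℝ k).eval (y + 1) := by
      simp [ascPochhammer_succ_left]
    rw [h1, h2, Nat.add_sub_cancel]
    push_cast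
    ring

lemma asc_eval_prod (n : ℕ) (x : ℝ) :
    (ascPochhammer ℝ n).eval x = ∏ k ∈ Finset.range n, (x + (k : ℝ)) := by
  induction n with
  | zero => simp
  | succ k ih => simp [ascPochhammer_succ_right, Finset.prod_range_succ, ih]

/-- i-th finite difference of the rising factorial of length j. -/
lemma key (j : ℕ) : ∀ (i : ℕ) (x : ℝ),
    (∑ s ∈ Finset.range (i + 1), (-1 : ℝ) ^ s * (Nat.choose i s : ℝ) *
        (ascPochhammer ℝ j).eval (x + (i : ℝ) - (s : ℝ))) =
      (Nat.descFactorial j i : ℝ) * (ascPochhammer ℝ (j - i)).eval (x + (i : ℝ))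
  | 0, x => by simp
  | (i + 1), x => by
    have step : (∑ s ∈ Finset.range (i + 1 + 1), (-1 : ℝ) ^ s * (Nat.choose (i + 1) s : ℝ) *
          (ascPochhammer ℝ j).eval (x + ((i : ℝ) + 1) - (s : ℝ))) =
        (∑ s ∈ Finset.range (i + 1), (-1 : ℝ) ^ s * (Nat.choose i s : ℝ) *
          (ascPochhammer ℝ j).eval ((x + 1) + (i : ℝ) - (s : ℝ))) -
        (∑ s ∈ Finset.range (i + 1), (-1 : ℝ) ^ s * (Nat.choose i s : ℝ) *
          (ascPochhammer ℝ j).eval (x + (i : ℝ) - (s : ℝ))) := by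
      rw [Finset.sum_range_succ' (fun s => (-1 : ℝ) ^ s * (Nat.choose (i + 1) s : ℝ) *
          (ascPochhammer ℝ j).eval (x + ((i : ℝ) + 1) - (s : ℝ)))]
      push_cast
      have hsplit : ∀ s ∈ Finset.range (i + 1),
          (-1 : ℝ) ^ (s + 1) * (Nat.choose (i + 1) (s + 1) : ℝ) *
            (ascPochhammer ℝ j).eval (x + ((i : ℝ) + 1) - ((s : ℝ) + 1)) =
          ((-1 : ℝ) ^ (s + 1) * (Nat.choose i (s + 1) : ℝ) *
            (ascPochhammer ℝ j).eval ((x + 1) + (i : ℝ) - ((s : ℝ) + 1))) -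
          ((-1 : ℝ) ^ s * (Nat.choose i s : ℝ) *
            (ascPochhammer ℝ j).eval (x + (i : ℝ) - (s : ℝ))) := by
        intro s _
        have : x + ((i : ℝ) + 1) - ((s : ℝ) + 1) = x + (i : ℝ) - (s : ℝ) := by ring
        rw [this]
        have : (x + 1) + (i : ℝ) - ((s : ℝ) + 1) = x + (i : ℝ) - (s : ℝ) := by ring
        rw [this, Nat.choose_succ_succ]
        push_cast
        ring
      rw [Finset.sum_congr rfl hsplit, Finset.sum_sub_distrib]
      have hA : (∑ s ∈ Finset.range (i + 1),
          (-1 : ℝ) ^ (s + 1) * (Nat.choose i (s + 1) : ℝ) *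
            (ascPochhammer ℝ j).eval ((x + 1) + (i : ℝ) - ((s : ℝ) + 1))) +
          (-1 : ℝ) ^ 0 * (Nat.choose (i + 1) 0 : ℝ) *
            (ascPochhammer ℝ j).eval (x + ((i : ℝ) + 1) - ((0 : ℕ) : ℝ)) =
          ∑ s ∈ Finset.range (i + 1), (-1 : ℝ) ^ s * (Nat.choose i s : ℝ) *
            (ascPochhammer ℝ j).eval ((x + 1) + (i : ℝ) - (s : ℝ)) := by
        rw [Finset.sum_range_succ (fun s => (-1 : ℝ) ^ (s + 1) * (Nat.choose i (s + 1) : ℝ) *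
            (ascPochhammer ℝ j).eval ((x + 1) + (i : ℝ) - ((s : ℝ) + 1)))]
        push_cast
        rw [Finset.sum_range_succ' (fun s => (-1 : ℝ) ^ s * (Nat.choose i s : ℝ) *
            (ascPochhammer ℝ j).eval ((x + 1) + (i : ℝ) - (s : ℝ)))]
        simp [Nat.choose_succ_self]
        ring_nf
      push_cast at hA ⊢
      linarith [hA]
    push_cast at step ⊢
    rw [step, key j i (x + 1), key j i x, ← mul_sub]
    have hd := asc_diff (j - i) (x + (i : ℝ))
    have : x + (i : ℝ) + 1 = x + 1 + (i : ℝ) := by ring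
    rw [this] at hd
    rw [hd, Nat.descFactorial_succ]
    have : j - i - 1 = j - (i + 1) := by omega
    rw [this]
    have : x + 1 + (i : ℝ) = x + ((i : ℝ) + 1) := by ring
    rw [this]
    push_cast
    ring

theorem stmt_4 (i j : ℕ) (α : ℝ) :
    (∑ s ∈ Finset.range (i + 1),
        (-1 : ℝ) ^ s * (Nat.choose i s : ℝ) *
          (ascPochhammer ℝ j).eval (α + (i : ℝ) - (s : ℝ))) *
      (ascPochhammer ℝ i).eval (α + (j : ℝ)) =
    (ascPochhammer ℝ i).eval ((j : ℝ) - (i : ℝ) + 1) *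
      (ascPochhammer ℝ j).eval (α + (i : ℝ)) := by
  rw [key j i α]
  have hD : (ascPochhammer ℝ i).eval ((j : ℝ) - (i : ℝ) + 1) =
      (Nat.descFactorial j i : ℝ) := by
    rcases le_or_gt i j with h | h
    · rcases Nat.eq_zero_or_pos i with hi | hi
      · subst hi; simp
      · rw [Nat.cast_descFactorial]
        congr 1
        have h1 : j - (i - 1) = j - i + 1 := by omega
        rw [h1]
        push_cast [h]
        ring
    · rw [Nat.descFactorial_eq_zero_iff_lt.mpr h, Nat.cast_zero, asc_eval_prod]
      apply Finset.prod_eq_zero (i := i - 1 - j) (by simp [Finset.mem_range]; omega)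
      have h1 : i - 1 - j = i - (j + 1) := by omega
      rw [h1, Nat.cast_sub h]
      push_cast
      ring
  rw [hD]
  rcases le_or_gt i j with h | h
  · have hmul := congrArg (fun p : Polynomial ℝ => p.eval (α + (i : ℝ)))
      (ascPochhammer_mul ℝ (j - i) i)
    simp only [Polynomial.eval_mul, Polynomial.eval_comp, Polynomial.eval_add,
      Polynomial.eval_X, Polynomial.eval_natCast] at hmul
    have h1 : ((j - i : ℕ) : ℝ) = (j : ℝ) - (i : ℝ) := by
      push_cast [h]; ring
    have h2 : j - i + i = j := by omega
    rw [h1, h2] at hmul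
    have : α + (i : ℝ) + ((j : ℝ) - (i : ℝ)) = α + (j : ℝ) := by ring
    rw [this] at hmul
    rw [mul_assoc, hmul]
  · rw [Nat.descFactorial_eq_zero_iff_lt.mpr h]
    simp
end

section
/- Let k be a positive integer and f a polynomial with coefficients in a commutative ring R. Consider the polynomial D(u₁,…,u_k, v₁,…,v_k) = det_{1≤i,j≤k}[ f(v_i − u_j) ] in 2k variables over R. Then D is divisible in the polynomial ring by the product of the two Vandermonde determinants ∏_{1≤i<j≤k}(v_i − v_j) · ∏_{1≤i<j≤k}(u_j − u_i). -/
open MvPolynomial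

-- divisibility from vanishing under identification of two variables
private lemma aux_dvd_of_aeval_eq_zero {σ R : Type*} [CommRing R] [DecidableEq σ] (a b : σ)
    {P : MvPolynomial σ R}
    (h : aeval (Function.update X a (X b) : σ → MvPolynomial σ R) P = 0) :
    (X a - X b : MvPolynomial σ R) ∣ P := by
  set h0 : σ → Polynomial (MvPolynomial σ R) := Function.update (fun s => Polynomial.C (X s)) a Polynomial.X
    with hh0
  have key : ∀ c : MvPolynomial σ R, Polynomial.eval c (aeval h0 P)
      = aeval (fun s => Polynomial.eval c (h0 s)) P := by
    intro c
    rw [aeval_def, aeval_def, show (Polynomial.eval c (eval₂ (algebraMap R (Polynomial (MvPolynomial σ R))) h0 P))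
      = (Polynomial.evalRingHom c) (eval₂ (algebraMap R (Polynomial (MvPolynomial σ R))) h0 P) from rfl,
      eval₂_comp_left]
    congr 1
    ext r
    simp [Polynomial.algebraMap_apply]
  have h1 : Polynomial.eval (X a : MvPolynomial σ R) (aeval h0 P) = P := by
    rw [key]
    have : (fun s => Polynomial.eval (X a : MvPolynomial σ R) (h0 s)) = X := by
      funext s
      by_cases hs : s = a
      · subst hs; simp [hh0]
      · simp [hh0, Function.update_of_ne hs]
    rw [this, aeval_X_left_apply]
  have h2 : Polynomial.eval (X b : MvPolynomial σ R) (aeval h0 P) = 0 := by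
    rw [key]
    have : (fun s => Polynomial.eval (X b : MvPolynomial σ R) (h0 s)) = Function.update X a (X b) := by
      funext s
      by_cases hs : s = a
      · subst hs; simp [hh0]
      · simp [hh0, Function.update_of_ne hs]
    rw [this, h]
  have := Polynomial.sub_dvd_eval_sub (X a : MvPolynomial σ R) (X b) (aeval h0 P)
  rwa [h1, h2, sub_zero] at this

private lemma aux_prime_X_sub_X {σ S : Type*} [CommRing S] [IsDomain S] {a b : σ} (h : b ≠ a) :
    Prime (X a - X b : MvPolynomial σ S) := by
  classical
  let e : MvPolynomial σ S ≃ₐ[S] Polynomial (MvPolynomial {c : σ // c ≠ a} S) :=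
    (renameEquiv S (Equiv.optionSubtypeNe a).symm).trans (optionEquivLeft S _)
  rw [← MulEquiv.prime_iff e.toMulEquiv]
  have : e.toMulEquiv (X a - X b) = Polynomial.X - Polynomial.C (X ⟨b, h⟩) := by
    show e (X a - X b) = _
    rw [map_sub]
    simp [e, Equiv.optionSubtypeNe_symm_self, Equiv.optionSubtypeNe_symm_of_ne h]
  rw [this]
  exact Polynomial.prime_X_sub_C _

private lemma aux_not_dvd_X_sub_X {σ S : Type*} [CommRing S] [Nontrivial S] {a b c d : σ}
    (hab : a ≠ b) (hcd : c ≠ d) (h1 : ¬(c = a ∧ d = b)) (h2 : ¬(c = b ∧ d = a)) :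
    ¬ ((X a - X b : MvPolynomial σ S) ∣ X c - X d) := by
  classical
  intro hdvd
  have := map_dvd (aeval (Function.update X a (X b) : σ → MvPolynomial σ S)) hdvd
  rw [map_sub, map_sub, aeval_X, aeval_X, aeval_X, aeval_X,
    Function.update_self, Function.update_of_ne (Ne.symm hab), sub_self] at this
  have hz := zero_dvd_iff.mp this
  rw [sub_eq_zero] at hz
  simp only [Function.update_apply] at hz
  split_ifs at hz with hc hd hd
  · exact hcd (hc.trans hd.symm)
  · exact h1 ⟨hc, (X_injective hz).symm⟩
  · exact h2 ⟨X_injective hz, hd⟩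
  · exact hcd (X_injective hz)

private lemma aux_prod_primes_dvd {α ι : Type*} [CommRing α] (s : Finset ι) (p : ι → α) :
    ∀ z : α, (∀ i ∈ s, Prime (p i)) → (∀ i ∈ s, p i ∣ z) →
    (∀ i ∈ s, ∀ j ∈ s, i ≠ j → ¬ p i ∣ p j) → ∏ i ∈ s, p i ∣ z := by
  classical
  induction s using Finset.cons_induction with
  | empty => simp
  | cons a s ha ih =>
    intro z hp hd hnd
    obtain ⟨z', rfl⟩ := hd a (Finset.mem_cons_self a s)
    rw [Finset.prod_cons]
    refine mul_dvd_mul_left _ ?_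
    refine ih z' (fun i hi => hp i (Finset.mem_cons_of_mem hi)) ?_
      (fun i hi j hj hij => hnd i (Finset.mem_cons_of_mem hi) j (Finset.mem_cons_of_mem hj) hij)
    intro i hi
    have hia : i ≠ a := fun h => ha (h ▸ hi)
    rcases (hp i (Finset.mem_cons_of_mem hi)).2.2 _ _ (hd i (Finset.mem_cons_of_mem hi)) with
      h | h
    · exact absurd h (hnd i (Finset.mem_cons_of_mem hi) a (Finset.mem_cons_self a s) hia)
    · exact h

private lemma aux_main {S : Type*} [CommRing S] [IsDomain S] (k : ℕ) (f : Polynomial S) :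
    ((∏ p ∈ Finset.filter (fun p : Fin k × Fin k => p.1 < p.2) Finset.univ,
        (X (Sum.inr p.1) - X (Sum.inr p.2)) :
          MvPolynomial (Fin k ⊕ Fin k) S) *
      ∏ p ∈ Finset.filter (fun p : Fin k × Fin k => p.1 < p.2) Finset.univ,
        (X (Sum.inl p.2) - X (Sum.inl p.1))) ∣
    Matrix.det (Matrix.of fun i j : Fin k =>
      Polynomial.aeval ((X (Sum.inr i) : MvPolynomial (Fin k ⊕ Fin k) S) - X (Sum.inl j)) f) := by
  classical
  set D : MvPolynomial (Fin k ⊕ Fin k) S := Matrix.det (Matrix.of fun i j : Fin k =>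
      Polynomial.aeval ((X (Sum.inr i) : MvPolynomial (Fin k ⊕ Fin k) S) - X (Sum.inl j)) f)
    with hD
  have hmap : ∀ g : Fin k ⊕ Fin k → MvPolynomial (Fin k ⊕ Fin k) S,
      aeval g D = Matrix.det (Matrix.of fun i j : Fin k =>
        Polynomial.aeval (g (Sum.inr i) - g (Sum.inl j)) f) := by
    intro g
    rw [hD, show (aeval g) (Matrix.det (Matrix.of fun i j : Fin k =>
      Polynomial.aeval ((X (Sum.inr i) : MvPolynomial (Fin k ⊕ Fin k) S) - X (Sum.inl j)) f))
      = ((aeval g : MvPolynomial (Fin k ⊕ Fin k) S →ₐ[S] _) :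
          MvPolynomial (Fin k ⊕ Fin k) S →+* MvPolynomial (Fin k ⊕ Fin k) S)
        (Matrix.det (Matrix.of fun i j : Fin k =>
          Polynomial.aeval ((X (Sum.inr i) : MvPolynomial (Fin k ⊕ Fin k) S) - X (Sum.inl j)) f))
      from rfl, RingHom.map_det]
    refine congrArg Matrix.det (Matrix.ext fun i j => ?_)
    simp only [RingHom.mapMatrix_apply, Matrix.map_apply, Matrix.of_apply, RingHom.coe_coe]
    rw [← Polynomial.aeval_algHom_apply, map_sub, aeval_X, aeval_X]
  set P : (Fin k × Fin k) ⊕ (Fin k × Fin k) → MvPolynomial (Fin k ⊕ Fin k) S :=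
    Sum.elim (fun q => X (Sum.inr q.1) - X (Sum.inr q.2))
      (fun q => X (Sum.inl q.2) - X (Sum.inl q.1)) with hP
  set t : Finset ((Fin k × Fin k) ⊕ (Fin k × Fin k)) :=
    Finset.disjSum (Finset.filter (fun p : Fin k × Fin k => p.1 < p.2) Finset.univ)
      (Finset.filter (fun p : Fin k × Fin k => p.1 < p.2) Finset.univ) with ht
  have main : ∏ i ∈ t, P i ∣ D := by
    apply aux_prod_primes_dvd t P D
    · -- primes
      rintro (q | q) hq <;>
        rw [ht] at hq <;>
        simp only [Finset.inl_mem_disjSum, Finset.inr_mem_disjSum, Finset.mem_filter] at hq <;>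
        simp only [hP, Sum.elim_inl, Sum.elim_inr]
      · exact aux_prime_X_sub_X (by simp [(Fin.ne_of_lt hq.2).symm])
      · exact aux_prime_X_sub_X (by simp [Fin.ne_of_lt hq.2])
    · -- dvd
      rintro (q | q) hq <;>
        rw [ht] at hq <;>
        simp only [Finset.inl_mem_disjSum, Finset.inr_mem_disjSum, Finset.mem_filter] at hq <;>
        simp only [hP, Sum.elim_inl, Sum.elim_inr]
      · apply aux_dvd_of_aeval_eq_zero
        rw [hmap]
        apply Matrix.det_zero_of_row_eq (Fin.ne_of_lt hq.2)
        funext j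
        simp [Function.update_apply, Fin.ne_of_lt hq.2, (Fin.ne_of_lt hq.2).symm]
      · apply aux_dvd_of_aeval_eq_zero
        rw [hmap]
        apply Matrix.det_zero_of_column_eq (Fin.ne_of_lt hq.2).symm
        intro i
        simp [Function.update_apply, Fin.ne_of_lt hq.2, (Fin.ne_of_lt hq.2).symm]
    · -- pairwise non-divisibility
      rintro (q | q) hq (q' | q') hq' hne <;>
        rw [ht] at hq hq' <;>
        simp only [Finset.inl_mem_disjSum, Finset.inr_mem_disjSum, Finset.mem_filter]
          at hq hq' <;>
        simp only [hP, Sum.elim_inl, Sum.elim_inr]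
      · refine aux_not_dvd_X_sub_X (by simp [Fin.ne_of_lt hq.2])
          (by simp [Fin.ne_of_lt hq'.2]) ?_ ?_
        · rintro ⟨h1, h2⟩
          simp only [Sum.inr.injEq] at h1 h2
          exact hne (congrArg Sum.inl (Prod.ext h1.symm h2.symm))
        · rintro ⟨h1, h2⟩
          simp only [Sum.inr.injEq] at h1 h2
          have := hq'.2
          rw [h1, h2] at this
          exact lt_asymm hq.2 this
      · exact aux_not_dvd_X_sub_X (by simp [Fin.ne_of_lt hq.2])
          (by simp [(Fin.ne_of_lt hq'.2).symm])
          (by rintro ⟨h1, -⟩; exact absurd h1 (by simp))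
          (by rintro ⟨h1, -⟩; exact absurd h1 (by simp))
      · exact aux_not_dvd_X_sub_X (by simp [(Fin.ne_of_lt hq.2).symm])
          (by simp [Fin.ne_of_lt hq'.2])
          (by rintro ⟨h1, -⟩; exact absurd h1 (by simp))
          (by rintro ⟨h1, -⟩; exact absurd h1 (by simp))
      · refine aux_not_dvd_X_sub_X (by simp [(Fin.ne_of_lt hq.2).symm])
          (by simp [(Fin.ne_of_lt hq'.2).symm]) ?_ ?_
        · rintro ⟨h1, h2⟩
          simp only [Sum.inl.injEq] at h1 h2
          exact hne (congrArg Sum.inr (Prod.ext h2.symm h1.symm))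
        · rintro ⟨h1, h2⟩
          simp only [Sum.inl.injEq] at h1 h2
          have := hq'.2
          rw [h1, h2] at this
          exact lt_asymm hq.2 this
  rw [ht, Finset.prod_disjSum] at main
  simpa [hP] using main

theorem stmt_5 {R : Type*} [CommRing R] (k : ℕ) (hk : 0 < k) (f : Polynomial R) :
    ((∏ p ∈ Finset.filter (fun p : Fin k × Fin k => p.1 < p.2) Finset.univ,
        (X (Sum.inr p.1) - X (Sum.inr p.2)) :
          MvPolynomial (Fin k ⊕ Fin k) R) *
      ∏ p ∈ Finset.filter (fun p : Fin k × Fin k => p.1 < p.2) Finset.univ,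
        (X (Sum.inl p.2) - X (Sum.inl p.1))) ∣
    Matrix.det (Matrix.of fun i j : Fin k =>
      Polynomial.aeval ((X (Sum.inr i) : MvPolynomial (Fin k ⊕ Fin k) R) - X (Sum.inl j)) f) := by
  classical
  set d := f.natDegree with hd
  set F : Polynomial (MvPolynomial ℕ ℤ) :=
    ∑ n ∈ Finset.range (d + 1), Polynomial.C (X n) * Polynomial.X ^ n with hF
  set φ : MvPolynomial ℕ ℤ →+* R :=
    (MvPolynomial.eval₂Hom (Int.castRingHom R) fun n => f.coeff n) with hφ
  have hFf : F.map φ = f := by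
    rw [hF, Polynomial.map_sum]
    conv_rhs => rw [Polynomial.as_sum_range' f (d + 1) (by omega)]
    refine Finset.sum_congr rfl fun n _ => ?_
    rw [Polynomial.map_mul, Polynomial.map_C, Polynomial.map_pow, Polynomial.map_X, hφ,
      eval₂Hom_X', Polynomial.C_mul_X_pow_eq_monomial]
  set ψ : MvPolynomial (Fin k ⊕ Fin k) (MvPolynomial ℕ ℤ) →+* MvPolynomial (Fin k ⊕ Fin k) R :=
    MvPolynomial.map φ with hψ
  have key := map_dvd ψ (aux_main k F)
  rw [map_mul, map_prod, map_prod, RingHom.map_det] at key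
  have hfac1 : ∀ p : Fin k × Fin k,
      ψ (X (Sum.inr p.1) - X (Sum.inr p.2)) =
        (X (Sum.inr p.1) - X (Sum.inr p.2) : MvPolynomial (Fin k ⊕ Fin k) R) := by
    intro p; rw [map_sub, hψ, MvPolynomial.map_X, MvPolynomial.map_X]
  have hfac2 : ∀ p : Fin k × Fin k,
      ψ (X (Sum.inl p.2) - X (Sum.inl p.1)) =
        (X (Sum.inl p.2) - X (Sum.inl p.1) : MvPolynomial (Fin k ⊕ Fin k) R) := by
    intro p; rw [map_sub, hψ, MvPolynomial.map_X, MvPolynomial.map_X]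
  have hcomp : ψ.comp (algebraMap (MvPolynomial ℕ ℤ)
        (MvPolynomial (Fin k ⊕ Fin k) (MvPolynomial ℕ ℤ)))
      = (algebraMap R (MvPolynomial (Fin k ⊕ Fin k) R)).comp φ := by
    refine RingHom.ext fun s => ?_
    rw [RingHom.comp_apply, RingHom.comp_apply, MvPolynomial.algebraMap_eq,
      MvPolynomial.algebraMap_eq, hψ, MvPolynomial.map_C]
  have hmat : ((Matrix.of fun i j : Fin k =>
        Polynomial.aeval
          ((X (Sum.inr i) : MvPolynomial (Fin k ⊕ Fin k) (MvPolynomial ℕ ℤ)) - X (Sum.inl j))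
          F).map ψ)
      = Matrix.of fun i j : Fin k =>
          Polynomial.aeval ((X (Sum.inr i) : MvPolynomial (Fin k ⊕ Fin k) R) - X (Sum.inl j)) f := by
    refine Matrix.ext fun i j => ?_
    simp only [Matrix.map_apply, Matrix.of_apply]
    rw [Polynomial.aeval_def, Polynomial.hom_eval₂, map_sub, hψ, MvPolynomial.map_X,
      MvPolynomial.map_X, ← hψ, hcomp, ← Polynomial.eval₂_map, hFf, ← Polynomial.aeval_def]
  rw [RingHom.mapMatrix_apply, hmat] at key
  simp only [hfac1, hfac2] at key
  exact key
end

section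
/- The double integral ∫₀^π ∫₀^π (cos α − 1)/(2 − cos α − cos β) dα dβ equals −π²/2. -/
open Real intervalIntegral

lemma innerInt (c : ℝ) (hc : 1 < c) :
    (∫ b in (0:ℝ)..Real.pi, (c - Real.cos b)⁻¹) = Real.pi / Real.sqrt (c^2 - 1) := by
  set k : ℝ := Real.sqrt (c^2 - 1) with hkdef
  have hk2 : k^2 = c^2 - 1 := Real.sq_sqrt (by nlinarith)
  have hkpos : 0 < k := Real.sqrt_pos.mpr (by nlinarith)
  set μ : ℝ := c + k with hμdef
  have hμ1 : 1 < μ := by nlinarith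
  have hden : ∀ x : ℝ, 0 < μ - Real.cos x := fun x => by
    have := Real.cos_le_one x; linarith
  set F : ℝ → ℝ := fun x => (x + 2 * Real.arctan (Real.sin x / (μ - Real.cos x))) / k with hF
  have hderiv : ∀ x ∈ Set.uIcc (0:ℝ) Real.pi, HasDerivAt F ((c - Real.cos x)⁻¹) x := by
    intro x _
    have hd := hden x
    have hq : HasDerivAt (fun x => Real.sin x / (μ - Real.cos x))
        ((Real.cos x * (μ - Real.cos x) - Real.sin x * Real.sin x) / (μ - Real.cos x)^2) x := by
      exact (Real.hasDerivAt_sin x).div ((hasDerivAt_const x μ).sub (Real.hasDerivAt_cos x)) hd.ne'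
      |>.congr_deriv (by simp only [Pi.sub_apply]; ring)
    have ha := hq.arctan
    have h1 : HasDerivAt F
        ((1 + 2 * ((Real.cos x * (μ - Real.cos x) - Real.sin x * Real.sin x) / (μ - Real.cos x)^2 /
          (1 + (Real.sin x / (μ - Real.cos x))^2))) / k) x := by
      exact ((hasDerivAt_id x).add ((ha.const_mul 2))).div_const k |>.congr_deriv (by ring)
    convert h1 using 1
    have hs : Real.sin x ^2 = 1 - Real.cos x ^2 := Real.sin_sq x
    have hcx : 0 < c - Real.cos x := by have := Real.cos_le_one x; nlinarith
    rw [hμdef] at hd ⊢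
    field_simp
    linear_combination (k + c - Real.cos x) * hk2 + (k + c - Real.cos x) * hs
  have hint : IntervalIntegrable (fun x => (c - Real.cos x)⁻¹) MeasureTheory.volume 0 Real.pi := by
    apply Continuous.intervalIntegrable
    exact (continuous_const.sub Real.continuous_cos).inv₀
      (fun x => (by have := Real.cos_le_one x; linarith : (0:ℝ) < c - Real.cos x).ne')
  rw [intervalIntegral.integral_eq_sub_of_hasDerivAt hderiv hint]
  simp [hF, Real.sin_pi, Real.cos_pi]

lemma outerInt :
    (∫ a in (0:ℝ)..Real.pi,
      -Real.pi * Real.sin (a/2) / Real.sqrt (2 - Real.cos (a/2)^2)) = -Real.pi^2/2 := by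
  set φ : ℝ → ℝ := fun a => -Real.pi * Real.sin (a/2) / Real.sqrt (2 - Real.cos (a/2)^2) with hφ
  set G : ℝ → ℝ := fun a => 2 * Real.pi * Real.arcsin (Real.cos (a/2) / Real.sqrt 2) with hG
  have hs2 : (0:ℝ) < Real.sqrt 2 := Real.sqrt_pos.mpr (by norm_num)
  have hs2sq : Real.sqrt 2 * Real.sqrt 2 = 2 := Real.mul_self_sqrt (by norm_num)
  have hderiv : ∀ x ∈ Set.uIcc (0:ℝ) Real.pi, HasDerivAt G (φ x) x := by
    intro x _
    have hcos1 : Real.cos (x/2) ^ 2 ≤ 1 := by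
      have := Real.neg_one_le_cos (x/2); have := Real.cos_le_one (x/2); nlinarith
    have habs : |Real.cos (x/2) / Real.sqrt 2| < 1 := by
      rw [abs_div, abs_of_pos hs2, div_lt_one hs2]
      have h1 : |Real.cos (x/2)| ≤ 1 := Real.abs_cos_le_one _
      nlinarith [Real.sq_sqrt (by norm_num : (2:ℝ) ≥ 0), Real.sqrt_nonneg 2]
    have h1 : Real.cos (x/2) / Real.sqrt 2 ≠ -1 := by
      intro h; rw [h] at habs; norm_num at habs
    have h2 : Real.cos (x/2) / Real.sqrt 2 ≠ 1 := by
      intro h; rw [h] at habs; norm_num at habs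
    have hin : HasDerivAt (fun a : ℝ => Real.cos (a/2) / Real.sqrt 2)
        (-Real.sin (x/2) * (1/2) / Real.sqrt 2) x := by
      exact (((hasDerivAt_id x).div_const 2).cos).div_const (Real.sqrt 2)
    have harc := (Real.hasDerivAt_arcsin h1 h2).comp x hin
    have hGd := harc.const_mul (2 * Real.pi)
    refine hGd.congr_deriv ?_
    symm
    have hpos : 0 < 2 - Real.cos (x/2)^2 := by nlinarith
    have hkey : 1 - (Real.cos (x/2) / Real.sqrt 2)^2 = (2 - Real.cos (x/2)^2)/2 := by
      rw [div_pow, Real.sq_sqrt (by norm_num : (0:ℝ) ≤ 2)]; ring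
    have hsq : Real.sqrt (1 - (Real.cos (x/2) / Real.sqrt 2)^2)
        = Real.sqrt (2 - Real.cos (x/2)^2) / Real.sqrt 2 := by
      rw [hkey, Real.sqrt_div hpos.le]
    rw [hφ]
    simp only
    rw [hsq]
    have hsqpos : 0 < Real.sqrt (2 - Real.cos (x/2)^2) := Real.sqrt_pos.mpr hpos
    field_simp
  have hint : IntervalIntegrable φ MeasureTheory.volume 0 Real.pi := by
    apply Continuous.intervalIntegrable
    apply Continuous.div
    · fun_prop
    · fun_prop
    · intro x
      have hcos1 : Real.cos (x/2) ^ 2 ≤ 1 := by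
        have := Real.neg_one_le_cos (x/2); have := Real.cos_le_one (x/2); nlinarith
      exact (Real.sqrt_pos.mpr (by nlinarith)).ne'
  rw [intervalIntegral.integral_eq_sub_of_hasDerivAt hderiv hint]
  have hpi4 : Real.arcsin (Real.cos (0/2) / Real.sqrt 2) = Real.pi/4 := by
    rw [show (0:ℝ)/2 = 0 by norm_num, Real.cos_zero]
    have : (1:ℝ) / Real.sqrt 2 = Real.sin (Real.pi/4) := by
      rw [Real.sin_pi_div_four]
      rw [div_eq_div_iff hs2.ne' (by norm_num : (2:ℝ) ≠ 0)]
      nlinarith [hs2sq]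
    rw [this, Real.arcsin_sin (by linarith [Real.pi_pos]) (by linarith [Real.pi_pos])]
  rw [hG]
  simp only
  rw [hpi4]
  simp [Real.cos_pi_div_two, Real.arcsin_zero]
  ring

theorem stmt_8 :
    (∫ a in (0:ℝ)..Real.pi, ∫ b in (0:ℝ)..Real.pi,
        (Real.cos a - 1) / (2 - Real.cos a - Real.cos b)) =
    -Real.pi ^ 2 / 2 := by
  have hpi := Real.pi_pos
  have hcong : Set.EqOn
      (fun a => ∫ b in (0:ℝ)..Real.pi, (Real.cos a - 1) / (2 - Real.cos a - Real.cos b))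
      (fun a => -Real.pi * Real.sin (a/2) / Real.sqrt (2 - Real.cos (a/2)^2))
      (Set.uIcc (0:ℝ) Real.pi) := by
    intro a ha
    rw [Set.uIcc_of_le hpi.le] at ha
    simp only
    rcases eq_or_lt_of_le ha.1 with h0 | h0
    · rw [← h0]
      simp
    · have hclt : Real.cos a < 1 := by
        have := Real.cos_lt_cos_of_nonneg_of_le_pi (le_refl (0:ℝ)) ha.2 h0
        rwa [Real.cos_zero] at this
      have hc : 1 < 2 - Real.cos a := by linarith
      have hstep : (∫ b in (0:ℝ)..Real.pi, (Real.cos a - 1) / (2 - Real.cos a - Real.cos b))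
          = (Real.cos a - 1) * ∫ b in (0:ℝ)..Real.pi, ((2 - Real.cos a) - Real.cos b)⁻¹ := by
        rw [← intervalIntegral.integral_const_mul]
        apply intervalIntegral.integral_congr
        intro b _
        simp only [div_eq_mul_inv]
      rw [hstep, innerInt _ hc]
      set u := Real.cos a with hu
      have h1 : 0 < 1 - u := by linarith
      have h3 : 0 < 3 - u := by linarith
      have hsin : Real.sin (a/2) = Real.sqrt ((1-u)/2) :=
        Real.sin_half_eq_sqrt h0.le (by linarith [ha.2])
      have hcos2 : Real.cos (a/2)^2 = 1/2 + u/2 := by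
        rw [Real.cos_sq, show 2*(a/2) = a by ring]
      have hfac : (2 - u)^2 - 1 = (1-u)*(3-u) := by ring
      rw [hsin, hcos2, hfac, Real.sqrt_mul h1.le,
        show 2 - (1/2 + u/2) = (3-u)/2 by ring,
        Real.sqrt_div h1.le 2, Real.sqrt_div h3.le 2]
      have e1 : Real.sqrt (1-u) * Real.sqrt (1-u) = 1-u := Real.mul_self_sqrt h1.le
      have p1 : 0 < Real.sqrt (1-u) := Real.sqrt_pos.mpr h1
      have p3 : 0 < Real.sqrt (3-u) := Real.sqrt_pos.mpr h3
      have p2 : 0 < Real.sqrt 2 := Real.sqrt_pos.mpr (by norm_num)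
      field_simp
      linear_combination e1
  rw [intervalIntegral.integral_congr hcong, outerInt]
end

section
/- Let v₁ > v₂ > … > v_k be distinct elements of a linearly ordered field (or reals), let λ = (λ₁ ≥ λ₂ ≥ … ≥ λ_k ≥ 0) be a partition, and let δ = (k−1, k−2, …, 0). Then det_{1≤i,j≤k}[ v_i^{λ_j + δ_j} ] = ( ∏_{1≤i<j≤k} (v_i − v_j) ) · s_λ(v₁,…,v_k), where s_λ is the Schur polynomial of shape λ in k variables. -/
/- The Schur polynomial `s_λ(v 0, …, v (k-1))`, defined combinatorially as the sum,
over all semistandard Young tableaux of shape `λ` with entries in `Fin k`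
(rows weakly increasing, columns strictly increasing), of the products of the
variables indexed by the entries. -/
open Classical in
noncomputable def schurPoly {F : Type*} [CommRing F] (k : ℕ) (lam : Fin k → ℕ)
    (hlam : ∀ i j : Fin k, i ≤ j → lam j ≤ lam i) (v : Fin k → F) : F :=
  ∑ T : (i : Fin k) → Fin (lam i) → Fin k,
    if (∀ (i : Fin k) (j j' : Fin (lam i)), j ≤ j' → T i j ≤ T i j') ∧
        (∀ (i i' : Fin k) (h : i < i') (j : Fin (lam i')),
          T i ⟨j.1, lt_of_lt_of_le j.2 (hlam i i' h.le)⟩ < T i' j) then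
      ∏ i : Fin k, ∏ j : Fin (lam i), v (T i j)
    else 0

open Finset

lemma card_filter_val_lt' (L t : ℕ) (h : t ≤ L) :
    (Finset.filter (fun c : Fin L => c.1 < t) Finset.univ).card = t := by
  have : Finset.filter (fun c : Fin L => c.1 < t) Finset.univ
      = Finset.image (Fin.castLE h) Finset.univ := by
    ext c
    simp only [mem_filter, mem_univ, true_and, mem_image]
    constructor
    · intro hc; exact ⟨⟨c.1, hc⟩, by simp⟩
    · rintro ⟨a, -, rfl⟩; exact a.2
  rw [this, Finset.card_image_of_injective _ (Fin.castLE_injective h)]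
  simp

lemma downward_closed_iff {L : ℕ} (s : Finset (Fin L))
    (hdc : ∀ c c' : Fin L, c ≤ c' → c' ∈ s → c ∈ s) (c : Fin L) :
    c ∈ s ↔ c.1 < s.card := by
  constructor
  · intro hc
    have hsub : Finset.filter (fun c' : Fin L => c'.1 < c.1 + 1) Finset.univ ⊆ s := by
      intro c' hc'
      simp only [mem_filter] at hc'
      exact hdc c' c (by omega) hc
    have := Finset.card_le_card hsub
    rwa [card_filter_val_lt' L (c.1+1) c.2] at this
  · intro hc
    by_contra hcs
    have hsub : s ⊆ Finset.filter (fun c' : Fin L => c'.1 < c.1) Finset.univ := by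
      intro c' hc'
      simp only [mem_filter, mem_univ, true_and]
      by_contra hlt
      exact hcs (hdc c c' (by omega) hc')
    have := Finset.card_le_card hsub
    rw [card_filter_val_lt' L c.1 (le_of_lt c.2)] at this
    omega

lemma prod_split_tail {F : Type*} [CommMonoid F] (L m : ℕ) (h : m ≤ L) (f : Fin L → F) (x : F)
    (hx : ∀ c : Fin L, m ≤ c.1 → f c = x) :
    ∏ c, f c = (∏ c : Fin m, f (Fin.castLE h c)) * x^(L-m) := by
  classical
  rw [← Finset.prod_filter_mul_prod_filter_not Finset.univ (fun c : Fin L => c.1 < m) f]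
  congr 1
  · rw [show Finset.filter (fun c : Fin L => c.1 < m) Finset.univ
        = Finset.image (Fin.castLE h) Finset.univ from ?_,
      Finset.prod_image (fun a _ b _ hab => Fin.castLE_injective h hab)]
    ext c
    simp only [mem_filter, mem_univ, true_and, mem_image]
    constructor
    · intro hc; exact ⟨⟨c.1, hc⟩, by simp⟩
    · rintro ⟨a, -, rfl⟩; exact a.2
  · rw [Finset.prod_congr rfl (fun c hc => hx c (by simpa using (Finset.mem_filter.mp hc).2)),
      Finset.prod_const]
    congr 1
    have := card_filter_val_lt' L m h
    have h2 := Finset.card_filter_add_card_filter_not (s := (Finset.univ : Finset (Fin L)))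
      (p := fun c : Fin L => c.1 < m)
    simp only [Finset.card_univ, Fintype.card_fin] at h2
    omega



/-- The SSYT condition for shape `sh`. -/
def CondS (k : ℕ) (sh : Fin k → ℕ) (hsh : ∀ i j : Fin k, i ≤ j → sh j ≤ sh i)
    (T : (i : Fin k) → Fin (sh i) → Fin k) : Prop :=
  (∀ (i : Fin k) (j j' : Fin (sh i)), j ≤ j' → T i j ≤ T i j') ∧
    (∀ (i i' : Fin k) (h : i < i') (j : Fin (sh i')),
      T i ⟨j.1, lt_of_lt_of_le j.2 (hsh i i' h.le)⟩ < T i' j)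

open Classical in
lemma schurPoly_eq {F : Type*} [CommRing F] (k : ℕ) (sh : Fin k → ℕ)
    (hsh : ∀ i j : Fin k, i ≤ j → sh j ≤ sh i) (v : Fin k → F) :
    schurPoly k sh hsh v = ∑ T : (i : Fin k) → Fin (sh i) → Fin k,
      if CondS k sh hsh T then ∏ i : Fin k, ∏ j : Fin (sh i), v (T i j) else 0 := by
  rw [schurPoly]
  refine Finset.sum_congr rfl fun T _ => ?_
  congr 1

section Branch
variable {F : Type*} [CommRing F] (n : ℕ) (lam : Fin (n+1) → ℕ)
  (hlam : ∀ i j : Fin (n+1), i ≤ j → lam j ≤ lam i) (v : Fin (n+1) → F)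

lemma entry_ge (T : (i : Fin (n+1)) → Fin (lam i) → Fin (n+1)) (hT : CondS (n+1) lam hlam T) :
    ∀ (i : Fin (n+1)) (j : Fin (lam i)), i.1 ≤ (T i j).1 := by
  have key : ∀ b : ℕ, ∀ (i : Fin (n+1)), i.1 = b → ∀ (j : Fin (lam i)), b ≤ (T i j).1 := by
    intro b
    induction b with
    | zero => intro i _ j; exact Nat.zero_le _
    | succ b ih =>
      intro i hib j
      have hb : b < n+1 := by omega
      have hlt : (⟨b, hb⟩ : Fin (n+1)) < i := by simp [Fin.lt_def, hib]
      have hcol := hT.2 ⟨b, hb⟩ i hlt j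
      have hih := ih ⟨b, hb⟩ rfl ⟨j.1, lt_of_lt_of_le j.2 (hlam ⟨b, hb⟩ i hlt.le)⟩
      have := Fin.lt_def.mp hcol
      omega
  intro i j
  exact key i.1 i rfl j

lemma last_row_eq (T : (i : Fin (n+1)) → Fin (lam i) → Fin (n+1)) (hT : CondS (n+1) lam hlam T) :
    ∀ j : Fin (lam (Fin.last n)), T (Fin.last n) j = Fin.last n := by
  intro j
  have h1 := entry_ge n lam hlam T hT (Fin.last n) j
  have h2 := (T (Fin.last n) j).2
  ext
  simp only [Fin.val_last] at h1 ⊢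
  omega

/-- number of entries `< n` (i.e. not the largest) in row `j` -/
noncomputable def Phi (T : (i : Fin (n+1)) → Fin (lam i) → Fin (n+1)) (j : Fin n) : ℕ :=
  (Finset.filter (fun c : Fin (lam j.castSucc) => (T j.castSucc c).1 < n) Finset.univ).card

lemma phi_iff (T : (i : Fin (n+1)) → Fin (lam i) → Fin (n+1)) (hT : CondS (n+1) lam hlam T)
    (j : Fin n) (c : Fin (lam j.castSucc)) :
    c.1 < Phi n lam T j ↔ (T j.castSucc c).1 < n := by
  rw [Phi, ← downward_closed_iff _ ?_ c, Finset.mem_filter]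
  · simp
  · intro a a' haa' ha'
    simp only [Finset.mem_filter, Finset.mem_univ, true_and] at ha' ⊢
    have := hT.1 j.castSucc a a' haa'
    have := Fin.le_def.mp this
    omega

lemma phi_mem (T : (i : Fin (n+1)) → Fin (lam i) → Fin (n+1)) (hT : CondS (n+1) lam hlam T)
    (j : Fin n) : lam j.succ ≤ Phi n lam T j ∧ Phi n lam T j ≤ lam j.castSucc := by
  constructor
  · have hsub : Finset.filter (fun c : Fin (lam j.castSucc) => c.1 < lam j.succ) Finset.univ
        ⊆ Finset.filter (fun c : Fin (lam j.castSucc) => (T j.castSucc c).1 < n) Finset.univ := by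
      intro c hc
      simp only [Finset.mem_filter, Finset.mem_univ, true_and] at hc ⊢
      have hcol := hT.2 j.castSucc j.succ (Fin.castSucc_lt_succ : j.castSucc < j.succ) ⟨c.1, hc⟩
      have hle := (T j.succ ⟨c.1, hc⟩).2
      have heq : (⟨c.1, lt_of_lt_of_le (show (⟨c.1, hc⟩ : Fin (lam j.succ)).1 < lam j.succ from hc)
          (hlam j.castSucc j.succ (Fin.castSucc_lt_succ : j.castSucc < j.succ).le)⟩ : Fin (lam j.castSucc)) = c := by
        ext; rfl
      rw [heq] at hcol
      have := Fin.lt_def.mp hcol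
      omega
    have := Finset.card_le_card hsub
    rwa [card_filter_val_lt' _ _ (hlam j.castSucc j.succ (Fin.castSucc_lt_succ : j.castSucc < j.succ).le)] at this
  · rw [Phi]
    calc (Finset.filter _ Finset.univ).card ≤ (Finset.univ : Finset (Fin (lam j.castSucc))).card :=
          Finset.card_le_card (Finset.filter_subset _ _)
      _ = lam j.castSucc := by simp


variable (mu : Fin n → ℕ)

/-- extend a tableau of shape `mu` on `Fin n` to one of shape `lam` on `Fin (n+1)`,
filling new cells with the largest entry -/
def up (T' : (i : Fin n) → Fin (mu i) → Fin n) : (i : Fin (n+1)) → Fin (lam i) → Fin (n+1) :=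
  fun i c => if hi : i.1 < n then
      (if hc : c.1 < mu ⟨i.1, hi⟩ then (T' ⟨i.1, hi⟩ ⟨c.1, hc⟩).castSucc else Fin.last n)
    else Fin.last n

/-- restrict a tableau of shape `lam` to the cells of `mu`, casting entries down -/
def down (hub : ∀ j : Fin n, mu j ≤ lam j.castSucc)
    (T : (i : Fin (n+1)) → Fin (lam i) → Fin (n+1)) : (i : Fin n) → Fin (mu i) → Fin n :=
  fun i c =>
    if h : (T i.castSucc ⟨c.1, lt_of_lt_of_le c.2 (hub i)⟩).1 < n
    then ⟨(T i.castSucc ⟨c.1, lt_of_lt_of_le c.2 (hub i)⟩).1, h⟩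
    else ⟨0, lt_of_le_of_lt (Nat.zero_le _) i.2⟩

section Fiber
variable (hub : ∀ j : Fin n, mu j ≤ lam j.castSucc) (hlb : ∀ j : Fin n, lam j.succ ≤ mu j)
  (hmu : ∀ i j : Fin n, i ≤ j → mu j ≤ mu i)
  (T : (i : Fin (n+1)) → Fin (lam i) → Fin (n+1))
  (hT : CondS (n+1) lam hlam T) (hPhi : Phi n lam T = mu)

include hlam hT hPhi

lemma down_val (i : Fin n) (c : Fin (mu i)) :
    (down n lam mu hub T i c).1 = (T i.castSucc ⟨c.1, lt_of_lt_of_le c.2 (hub i)⟩).1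
    ∧ (T i.castSucc ⟨c.1, lt_of_lt_of_le c.2 (hub i)⟩).1 < n := by
  have hlt : (c.1 : ℕ) < Phi n lam T i := by rw [hPhi]; exact c.2
  have hent := (phi_iff n lam hlam T hT i ⟨c.1, lt_of_lt_of_le c.2 (hub i)⟩).mp hlt
  rw [down, dif_pos hent]
  exact ⟨rfl, hent⟩

lemma down_mem : CondS n mu hmu (down n lam mu hub T) := by
  constructor
  · intro i c c' hcc'
    have h1 := down_val n lam hlam mu hub T hT hPhi i c
    have h2 := down_val n lam hlam mu hub T hT hPhi i c'
    have hrow := hT.1 i.castSucc ⟨c.1, lt_of_lt_of_le c.2 (hub i)⟩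
      ⟨c'.1, lt_of_lt_of_le c'.2 (hub i)⟩ (Fin.mk_le_mk.mpr hcc')
    rw [Fin.le_def] at hrow ⊢
    omega
  · intro i i' h c
    have h1 := down_val n lam hlam mu hub T hT hPhi i
      ⟨c.1, lt_of_lt_of_le c.2 (hmu i i' h.le)⟩
    have h2 := down_val n lam hlam mu hub T hT hPhi i' c
    have hcol := hT.2 i.castSucc i'.castSucc (Fin.castSucc_lt_castSucc_iff.mpr h)
      ⟨c.1, lt_of_lt_of_le c.2 (hub i')⟩
    rw [Fin.lt_def] at hcol ⊢
    simp only [Fin.coe_castSucc, Fin.val_mk] at hcol h1 h2 ⊢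
    omega

lemma up_down : up n lam mu (down n lam mu hub T) = T := by
  funext i c
  rw [up]
  by_cases hi : i.1 < n
  · rw [dif_pos hi]
    by_cases hc : c.1 < mu ⟨i.1, hi⟩
    · rw [dif_pos hc]
      have h1 := down_val n lam hlam mu hub T hT hPhi ⟨i.1, hi⟩ ⟨c.1, hc⟩
      ext
      rw [Fin.coe_castSucc, h1.1]
      rfl
    · rw [dif_neg hc]
      have hlt : ¬ ((c.1 : ℕ) < Phi n lam T ⟨i.1, hi⟩) := by rw [hPhi]; exact hc
      have hcc : c.1 < lam ((⟨i.1, hi⟩ : Fin n).castSucc) := c.2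
      have hent := (phi_iff n lam hlam T hT ⟨i.1, hi⟩ ⟨c.1, hcc⟩).not.mp hlt
      have h2 := (T (⟨i.1, hi⟩ : Fin n).castSucc ⟨c.1, hcc⟩).2
      have h3 : (T i c).1 = n := by
        have heq : T (⟨i.1, hi⟩ : Fin n).castSucc ⟨c.1, hcc⟩ = T i c := rfl
        rw [← heq]; omega
      ext
      simp only [Fin.val_last]
      omega
  · rw [dif_neg hi]
    have hieq : i = Fin.last n := by ext; simp only [Fin.val_last]; omega
    subst hieq
    exact (last_row_eq n lam hlam T hT c).symm

end Fiber

section UpSide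
variable (hub : ∀ j : Fin n, mu j ≤ lam j.castSucc) (hlb : ∀ j : Fin n, lam j.succ ≤ mu j)
  (hmu : ∀ i j : Fin n, i ≤ j → mu j ≤ mu i)
  (T' : (i : Fin n) → Fin (mu i) → Fin n) (hT' : CondS n mu hmu T')

include hlam hlb hmu hT'

lemma up_cond : CondS (n+1) lam hlam (up n lam mu T') := by
  constructor
  · intro i c c' hcc'
    simp only [up]
    by_cases hi : i.1 < n
    · simp only [dif_pos hi]
      by_cases hc : c.1 < mu ⟨i.1, hi⟩
      · by_cases hc' : c'.1 < mu ⟨i.1, hi⟩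
        · simp only [dif_pos hc, dif_pos hc']
          rw [Fin.castSucc_le_castSucc_iff]
          exact hT'.1 ⟨i.1, hi⟩ ⟨c.1, hc⟩ ⟨c'.1, hc'⟩ (Fin.mk_le_mk.mpr (Fin.le_def.mp hcc'))
        · simp only [dif_pos hc, dif_neg hc']
          exact Fin.le_last _
      · have hc' : ¬ c'.1 < mu ⟨i.1, hi⟩ := by have := Fin.le_def.mp hcc'; omega
        simp only [dif_neg hc, dif_neg hc']
        exact le_refl _
    · simp only [dif_neg hi]
      exact le_refl _
  · intro i i' h c
    have hi : i.1 < n := by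
      have h1 := Fin.lt_def.mp h
      have h2 : i'.1 < n + 1 := i'.2
      omega
    have hkey : (c.1:ℕ) < mu ⟨i.1, hi⟩ := by
      have h1 : lam i' ≤ lam ((⟨i.1, hi⟩ : Fin n).succ) := by
        refine hlam _ i' ?_
        rw [Fin.le_def]
        simp only [Fin.val_succ]
        exact Fin.lt_def.mp h
      have h2 := hlb ⟨i.1, hi⟩
      have h3 := c.2
      omega
    simp only [up, dif_pos hi]
    rw [dif_pos (show ((⟨c.1, lt_of_lt_of_le c.2 (hlam i i' h.le)⟩ : Fin (lam i))).1
        < mu ⟨i.1, hi⟩ from hkey)]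
    by_cases hi' : i'.1 < n
    · simp only [dif_pos hi']
      by_cases hc' : c.1 < mu ⟨i'.1, hi'⟩
      · simp only [dif_pos hc']
        rw [Fin.castSucc_lt_castSucc_iff]
        exact hT'.2 ⟨i.1, hi⟩ ⟨i'.1, hi'⟩ (Fin.mk_lt_mk.mpr (Fin.lt_def.mp h)) ⟨c.1, hc'⟩
      · simp only [dif_neg hc']
        exact Fin.castSucc_lt_last _
    · simp only [dif_neg hi']
      exact Fin.castSucc_lt_last _

include hub

lemma up_phi : Phi n lam (up n lam mu T') = mu := by
  funext j
  rw [Phi]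
  have hiff : ∀ c : Fin (lam j.castSucc), ((up n lam mu T' j.castSucc c).1 < n) ↔ c.1 < mu j := by
    intro c
    have hj : (j.castSucc).1 < n := j.2
    rw [up, dif_pos hj]
    by_cases hc : c.1 < mu ⟨(j.castSucc).1, hj⟩
    · rw [dif_pos hc]
      refine iff_of_true ?_ hc
      rw [Fin.coe_castSucc]
      exact (T' _ _).2
    · rw [dif_neg hc]
      refine iff_of_false ?_ hc
      simp
  rw [Finset.filter_congr (fun c _ => by rw [hiff c])]
  exact card_filter_val_lt' _ _ (hub j)

lemma down_up : down n lam mu hub (up n lam mu T') = T' := by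
  funext i c
  have hval : up n lam mu T' i.castSucc
      ⟨c.1, lt_of_lt_of_le c.2 (hub i)⟩ = (T' i c).castSucc := by
    rw [up, dif_pos (show (i.castSucc).1 < n from i.2),
      dif_pos (show ((⟨c.1, lt_of_lt_of_le c.2 (hub i)⟩ : Fin (lam i.castSucc))).1
        < mu ⟨(i.castSucc).1, i.2⟩ from c.2)]
    rfl
  simp only [down]
  rw [hval]
  rw [dif_pos (show ((T' i c).castSucc).1 < n by rw [Fin.coe_castSucc]; exact (T' i c).2)]
  ext
  simp
end UpSide

section Weight
variable (hub : ∀ j : Fin n, mu j ≤ lam j.castSucc)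
  (T : (i : Fin (n+1)) → Fin (lam i) → Fin (n+1))
  (hT : CondS (n+1) lam hlam T) (hPhi : Phi n lam T = mu)

include hlam hT hPhi

lemma weight_eq :
    ∏ i : Fin (n+1), ∏ c : Fin (lam i), v (T i c)
      = ((∏ j : Fin n, v (Fin.last n) ^ (lam j.castSucc - mu j))
          * v (Fin.last n) ^ lam (Fin.last n))
        * ∏ i : Fin n, ∏ c : Fin (mu i), v ((down n lam mu hub T i c).castSucc) := by
  rw [Fin.prod_univ_castSucc]
  have hlastrow : ∏ c : Fin (lam (Fin.last n)), v (T (Fin.last n) c)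
      = v (Fin.last n) ^ lam (Fin.last n) := by
    rw [Finset.prod_congr rfl (fun c _ => by rw [last_row_eq n lam hlam T hT c]),
      Finset.prod_const]
    simp
  have hrow : ∀ j : Fin n, ∏ c : Fin (lam j.castSucc), v (T j.castSucc c)
      = (∏ c : Fin (mu j), v ((down n lam mu hub T j c).castSucc))
        * v (Fin.last n) ^ (lam j.castSucc - mu j) := by
    intro j
    rw [prod_split_tail (lam j.castSucc) (mu j) (hub j)
      (fun c => v (T j.castSucc c)) (v (Fin.last n)) ?_]
    · congr 1
      refine Finset.prod_congr rfl fun c _ => ?_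
      have h1 := down_val n lam hlam mu hub T hT hPhi j c
      congr 1
      ext
      rw [Fin.coe_castSucc, h1.1]
      rfl
    · intro c hc
      have hnot : ¬ (c.1 < Phi n lam T j) := by rw [hPhi]; omega
      have h2 := (phi_iff n lam hlam T hT j c).not.mp hnot
      have h3 := (T j.castSucc c).2
      have h4 : T j.castSucc c = Fin.last n := by
        ext; simp only [Fin.val_last]; omega
      show v (T j.castSucc c) = v (Fin.last n)
      rw [h4]
  rw [hlastrow, Finset.prod_congr rfl (fun j _ => hrow j), Finset.prod_mul_distrib]
  ring

end Weight

open Classical in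
lemma fiber_sum (hub : ∀ j : Fin n, mu j ≤ lam j.castSucc)
    (hlb : ∀ j : Fin n, lam j.succ ≤ mu j)
    (hmu : ∀ i j : Fin n, i ≤ j → mu j ≤ mu i) :
    (∑ T : (i : Fin (n+1)) → Fin (lam i) → Fin (n+1),
      if CondS (n+1) lam hlam T ∧ Phi n lam T = mu then
        ∏ i : Fin (n+1), ∏ c : Fin (lam i), v (T i c) else 0)
    = ((∏ j : Fin n, v (Fin.last n) ^ (lam j.castSucc - mu j))
        * v (Fin.last n) ^ lam (Fin.last n))
      * schurPoly n mu hmu (fun i => v i.castSucc) := by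
  classical
  rw [schurPoly_eq, Finset.mul_sum, ← Finset.sum_filter]
  simp only [mul_ite, mul_zero]
  rw [← Finset.sum_filter]
  refine Finset.sum_bij' (fun T hT => down n lam mu hub T) (fun T' hT' => up n lam mu T')
    ?_ ?_ ?_ ?_ ?_
  · intro T hTm
    simp only [Finset.mem_filter, Finset.mem_univ, true_and] at hTm ⊢
    exact down_mem n lam hlam mu hub hmu T hTm.1 hTm.2
  · intro T' hT'm
    simp only [Finset.mem_filter, Finset.mem_univ, true_and] at hT'm ⊢
    exact ⟨up_cond n lam hlam mu hlb hmu T' hT'm, up_phi n lam hlam mu hub hlb hmu T' hT'm⟩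
  · intro T hTm
    simp only [Finset.mem_filter, Finset.mem_univ, true_and] at hTm
    exact up_down n lam hlam mu hub T hTm.1 hTm.2
  · intro T' hT'm
    simp only [Finset.mem_filter, Finset.mem_univ, true_and] at hT'm
    exact down_up n lam hlam mu hub hlb hmu T' hT'm
  · intro T hTm
    simp only [Finset.mem_filter, Finset.mem_univ, true_and] at hTm
    exact weight_eq n lam hlam v mu hub T hTm.1 hTm.2

open Classical in
lemma schur_branch :
    schurPoly (n+1) lam hlam v
      = ∑ mu' ∈ Fintype.piFinset (fun j : Fin n => Finset.Icc (lam j.succ) (lam j.castSucc)),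
          if h : ∀ i j : Fin n, i ≤ j → mu' j ≤ mu' i then
            ((∏ j : Fin n, v (Fin.last n) ^ (lam j.castSucc - mu' j))
              * v (Fin.last n) ^ lam (Fin.last n))
            * schurPoly n mu' h (fun i => v i.castSucc)
          else 0 := by
  classical
  rw [schurPoly_eq]
  have hswap : ∑ T : (i : Fin (n+1)) → Fin (lam i) → Fin (n+1),
        (if CondS (n+1) lam hlam T then ∏ i : Fin (n+1), ∏ c : Fin (lam i), v (T i c) else 0)
      = ∑ mu' ∈ Fintype.piFinset (fun j : Fin n => Finset.Icc (lam j.succ) (lam j.castSucc)),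
          ∑ T : (i : Fin (n+1)) → Fin (lam i) → Fin (n+1),
            if CondS (n+1) lam hlam T ∧ Phi n lam T = mu' then
              ∏ i : Fin (n+1), ∏ c : Fin (lam i), v (T i c) else 0 := by
    rw [Finset.sum_comm]
    refine Finset.sum_congr rfl fun T _ => ?_
    by_cases hc : CondS (n+1) lam hlam T
    · simp only [hc, true_and, if_pos hc]
      rw [Finset.sum_ite_eq, if_pos (Fintype.mem_piFinset.mpr
        (fun j => Finset.mem_Icc.mpr (phi_mem n lam hlam T hc j)))]
      simp
    · simp only [hc, false_and, if_neg hc, if_false, Finset.sum_const_zero]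
  rw [hswap]
  refine Finset.sum_congr rfl fun mu' hmu' => ?_
  rw [Fintype.mem_piFinset] at hmu'
  have hub : ∀ j : Fin n, mu' j ≤ lam j.castSucc := fun j => (Finset.mem_Icc.mp (hmu' j)).2
  have hlb : ∀ j : Fin n, lam j.succ ≤ mu' j := fun j => (Finset.mem_Icc.mp (hmu' j)).1
  have hmu : ∀ i j : Fin n, i ≤ j → mu' j ≤ mu' i := by
    intro i j hij
    rcases eq_or_lt_of_le hij with h | h
    · rw [h]
    · have h1 : i.succ ≤ j.castSucc := by
        rw [Fin.le_def]
        simp only [Fin.val_succ, Fin.coe_castSucc]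
        exact Fin.lt_def.mp h
      calc mu' j ≤ lam j.castSucc := hub j
        _ ≤ lam i.succ := hlam _ _ h1
        _ ≤ mu' i := hlb i
  rw [dif_pos hmu]
  exact fiber_sum n lam hlam v mu' hub hlb hmu

end Branch


open Finset

section
variable {F : Type*} [CommRing F]

lemma geom_tel (w x : F) (a d c : ℕ) :
    (w - x) * ∑ m ∈ Finset.Icc a (a+d), x^(a+d-m) * w^(m+c)
      = w^(a+d+c+1) - x^(d+1) * w^(a+c) := by
  induction d with
  | zero => simp [pow_succ]; ring
  | succ d ih =>
    have hins : Finset.Icc a (a+(d+1)) = insert (a+d+1) (Finset.Icc a (a+d)) := by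
      ext m; simp [Finset.mem_Icc, Finset.mem_insert]; omega
    rw [show a + (d+1) = a + d + 1 by ring] at *
    have hre : ∀ m ∈ Finset.Icc a (a+d), x ^ (a + d + 1 - m) * w ^ (m + c)
        = x * (x ^ (a + d - m) * w ^ (m + c)) := by
      intro m hm
      simp only [Finset.mem_Icc] at hm
      rw [show a + d + 1 - m = (a + d - m) + 1 by omega, pow_succ]
      ring
    rw [hins, Finset.sum_insert (by simp), Finset.sum_congr rfl hre, ← Finset.mul_sum,
      Nat.sub_self, pow_zero, one_mul, mul_add, mul_left_comm (w-x) x, ih]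
    ring

lemma det_as_rows (n : ℕ) (B : Fin n → Fin n → F) :
    Matrix.det (Matrix.of fun i j => B j i)
      = (Matrix.detRowAlternating (R := F)).toMultilinearMap B := by
  rw [← Matrix.det_transpose]; rfl

lemma card_filter_val_lt (L t : ℕ) (h : t ≤ L) :
    (Finset.filter (fun c : Fin L => c.1 < t) Finset.univ).card = t := by
  have : Finset.filter (fun c : Fin L => c.1 < t) Finset.univ
      = Finset.image (Fin.castLE h) Finset.univ := by
    ext c
    simp only [mem_filter, mem_univ, true_and, mem_image]
    constructor
    · intro hc; exact ⟨⟨c.1, hc⟩, by simp⟩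
    · rintro ⟨a, -, rfl⟩; exact a.2
  rw [this, Finset.card_image_of_injective _ (Fin.castLE_injective h)]
  simp

lemma telescope_sum (n : ℕ) (lam : Fin (n+1) → ℕ)
    (hlam : ∀ i j : Fin (n+1), i ≤ j → lam j ≤ lam i) (m : Fin (n+1)) :
    ∑ j ∈ Finset.filter (fun j : Fin n => m.1 ≤ j.1) Finset.univ,
      (lam j.castSucc - lam j.succ + 1)
      = (lam m - lam (Fin.last n)) + (n - m.1) := by
  induction m using Fin.reverseInduction with
  | last =>
    rw [Finset.filter_false_of_mem, Finset.sum_empty]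
    · simp
    · intro j _; simp only [Fin.val_last]; omega
  | cast m ih =>
    have hsplit : Finset.filter (fun j : Fin n => (m.castSucc).1 ≤ j.1) Finset.univ
        = insert m (Finset.filter (fun j : Fin n => (m.succ).1 ≤ j.1) Finset.univ) := by
      ext j
      simp only [mem_filter, mem_univ, true_and, mem_insert, Fin.coe_castSucc, Fin.val_succ,
        Fin.ext_iff]
      omega
    rw [hsplit, Finset.sum_insert (by simp), ih]
    have h1 : lam m.succ ≤ lam m.castSucc := hlam _ _ (Fin.castSucc_lt_succ : m.castSucc < m.succ).le
    have h2 : lam (Fin.last n) ≤ lam m.succ := hlam _ _ (Fin.le_last _)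
    have h3 : m.1 + 1 ≤ n := m.2
    simp only [Fin.coe_castSucc, Fin.val_succ]
    omega

lemma stair_classify (n : ℕ) (r : Fin n → Fin (n+1))
    (hr : ∀ j, r j = j.castSucc ∨ r j = j.succ) (hinj : Function.Injective r) :
    ∃ m : Fin (n+1), r = m.succAbove := by
  classical
  have step : ∀ j j' : Fin n, j.1 + 1 = j'.1 → r j = j.succ → r j' = j'.succ := by
    intro j j' h hj
    rcases hr j' with h' | h'
    · exfalso
      have : r j = r j' := by rw [hj, h']; ext; simp [Fin.val_succ, Fin.coe_castSucc]; omega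
      have := hinj this
      rw [this] at h; omega
    · exact h'
  have mono : ∀ (d : ℕ) (j j' : Fin n), j.1 + d = j'.1 → r j = j.succ → r j' = j'.succ := by
    intro d
    induction d with
    | zero => intro j j' h hj; have : j = j' := by ext; omega
              rwa [← this]
    | succ d ih =>
      intro j j' h hj
      have hlt : j.1 + d < n := by omega
      have := ih j ⟨j.1 + d, hlt⟩ rfl hj
      exact step ⟨j.1+d, hlt⟩ j' (by simpa using by omega) this
  by_cases hex : ∃ j : Fin n, r j = j.succ
  · set s : Finset (Fin n) := Finset.filter (fun j => r j = j.succ) Finset.univ with hs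
    have hne : s.Nonempty := ⟨hex.choose, by simp [hs, hex.choose_spec]⟩
    set j₀ := s.min' hne with hj₀
    have hj₀s : r j₀ = j₀.succ := by
      have := s.min'_mem hne; simpa [hs] using this
    refine ⟨j₀.castSucc, funext fun j => ?_⟩
    rcases le_or_gt j₀ j with h | h
    · rw [Fin.succAbove_of_le_castSucc _ _ (by simpa using h)]
      exact mono (j.1 - j₀.1) j₀ j (by omega) hj₀s
    · rw [Fin.succAbove_of_castSucc_lt _ _ (by simpa using h)]
      rcases hr j with h' | h'
      · exact h'
      · exfalso
        have hjs : j ∈ s := by simp [hs, h']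
        exact absurd (s.min'_le j hjs) (not_le.mpr h)
  · refine ⟨Fin.last n, funext fun j => ?_⟩
    rw [Fin.succAbove_last]
    rcases hr j with h | h
    · exact h
    · exact absurd ⟨j, h⟩ hex

lemma detA (n : ℕ) (lam : Fin (n+1) → ℕ)
    (hlam : ∀ i j : Fin (n+1), i ≤ j → lam j ≤ lam i) (v : Fin (n+1) → F) :
    Matrix.det (Matrix.of fun i j : Fin (n+1) => v i ^ (lam j + (n - j.1))) =
      v (Fin.last n) ^ lam (Fin.last n)
        * ((∏ i : Fin n, (v i.castSucc - v (Fin.last n)))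
        * ∑ μ ∈ Fintype.piFinset (fun j : Fin n => Finset.Icc (lam j.succ) (lam j.castSucc)),
            (∏ j : Fin n, v (Fin.last n) ^ (lam j.castSucc - μ j)) *
            Matrix.det (Matrix.of fun i j : Fin n => v i.castSucc ^ (μ j + (n - 1 - j.1)))) := by
  classical
  set x := v (Fin.last n) with hx
  set e : Fin (n+1) → ℕ := fun j => lam j + (n - j.1) with he
  set M : Fin (n+1) → F :=
    fun m => Matrix.det (Matrix.of fun i j' : Fin n => v i.castSucc ^ e (m.succAbove j')) with hM
  -- LHS cofactor expansion along the last row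
  have hLHS : Matrix.det (Matrix.of fun i j : Fin (n+1) => v i ^ (lam j + (n - j.1)))
      = ∑ j : Fin (n+1), (-1)^(n + j.1) * x ^ e j * M j := by
    rw [Matrix.det_succ_row _ (Fin.last n)]
    refine Finset.sum_congr rfl fun j _ => ?_
    have h1 : ((Matrix.of fun i j : Fin (n+1) => v i ^ (lam j + (n - j.1))).submatrix
        Fin.castSucc j.succAbove)
        = Matrix.of fun i j' : Fin n => v i.castSucc ^ e (j.succAbove j') := by
      ext i j'
      simp [he]
    rw [show (Fin.last n).succAbove = Fin.castSucc from Fin.succAbove_last, h1]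
    simp only [Matrix.of_apply, Fin.val_last, hM]
    rfl
  rw [hLHS]
  set u : Fin (n+1) → Fin n → F := fun t i => v i.castSucc ^ e t with hu
  set c : Fin n → F := fun j => x ^ (lam j.castSucc - lam j.succ + 1) with hc
  set g : (j : Fin n) → ℕ → (Fin n → F) := fun j m i =>
    (v i.castSucc - x) * (x ^ (lam j.castSucc - m) * v i.castSucc ^ (m + (n - 1 - j.1))) with hg
  have hRHS1 : (∏ i : Fin n, (v i.castSucc - x))
        * ∑ μ ∈ Fintype.piFinset (fun j : Fin n => Finset.Icc (lam j.succ) (lam j.castSucc)),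
            (∏ j : Fin n, x ^ (lam j.castSucc - μ j)) *
            Matrix.det (Matrix.of fun i j : Fin n => v i.castSucc ^ (μ j + (n - 1 - j.1)))
      = ∑ μ ∈ Fintype.piFinset (fun j : Fin n => Finset.Icc (lam j.succ) (lam j.castSucc)),
          Matrix.det (Matrix.of fun i j : Fin n => g j (μ j) i) := by
    rw [Finset.mul_sum]
    refine Finset.sum_congr rfl fun μ _ => ?_
    rw [show (Matrix.of fun i j : Fin n => g j (μ j) i)
        = Matrix.of fun i j : Fin n => (v i.castSucc - x) *
            ((Matrix.of fun i j : Fin n =>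
              x ^ (lam j.castSucc - μ j) * v i.castSucc ^ (μ j + (n - 1 - j.1))) i j) from rfl,
      Matrix.det_mul_column]
    rw [show (Matrix.of fun i j : Fin n =>
            x ^ (lam j.castSucc - μ j) * v i.castSucc ^ (μ j + (n - 1 - j.1)))
        = Matrix.of fun i j : Fin n => (fun j : Fin n => x ^ (lam j.castSucc - μ j)) j *
            ((Matrix.of fun i j : Fin n => v i.castSucc ^ (μ j + (n - 1 - j.1))) i j) from rfl,
      Matrix.det_mul_row]
  have hRHS2 : ∑ μ ∈ Fintype.piFinset (fun j : Fin n => Finset.Icc (lam j.succ) (lam j.castSucc)),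
          Matrix.det (Matrix.of fun i j : Fin n => g j (μ j) i)
      = Matrix.det (Matrix.of fun i j : Fin n =>
          ∑ m ∈ Finset.Icc (lam j.succ) (lam j.castSucc), g j m i) := by
    rw [det_as_rows n (fun j i => ∑ m ∈ Finset.Icc (lam j.succ) (lam j.castSucc), g j m i)]
    have := (Matrix.detRowAlternating (R := F) (n := Fin n)).toMultilinearMap.map_sum_finset
      (fun j m => g j m) (fun j : Fin n => Finset.Icc (lam j.succ) (lam j.castSucc))
    rw [show (fun j : Fin n => fun i => ∑ m ∈ Finset.Icc (lam j.succ) (lam j.castSucc), g j m i)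
        = (fun j : Fin n => ∑ m ∈ Finset.Icc (lam j.succ) (lam j.castSucc), g j m) from
        funext fun j => by ext i; simp, this]
    refine Finset.sum_congr rfl fun μ _ => ?_
    rw [← det_as_rows n (fun j i => g j (μ j) i)]
  have hRHS3 : Matrix.det (Matrix.of fun i j : Fin n =>
          ∑ m ∈ Finset.Icc (lam j.succ) (lam j.castSucc), g j m i)
      = Matrix.det (Matrix.of fun i j : Fin n => u j.castSucc i - c j * u j.succ i) := by
    congr 1
    ext i j
    simp only [Matrix.of_apply, hg]
    have hab : lam j.succ ≤ lam j.castSucc := hlam _ _ (Fin.castSucc_lt_succ : j.castSucc < j.succ).le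
    have hd : lam j.castSucc = lam j.succ + (lam j.castSucc - lam j.succ) := by omega
    have hjn : j.1 < n := j.2
    rw [← Finset.mul_sum]
    have hg2 := geom_tel (v i.castSucc) x (lam j.succ) (lam j.castSucc - lam j.succ) (n - 1 - j.1)
    rw [← hd] at hg2
    rw [hg2]
    simp only [hu, hc, he, Fin.coe_castSucc, Fin.val_succ]
    rw [show lam j.castSucc + (n - 1 - j.1) + 1 = lam j.castSucc + (n - j.1) by omega,
      show lam j.succ + (n - 1 - j.1) = lam j.succ + (n - (j.1+1)) by omega]
  set coef : Fin n → Fin (n+1) → F := fun j t => if t = j.succ then -(c j) else 1 with hcoef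
  set D : (Fin n → Fin (n+1)) → F :=
    fun r => Matrix.det (Matrix.of fun i j : Fin n => u (r j) i) with hD
  have hRHS4 : Matrix.det (Matrix.of fun i j : Fin n => u j.castSucc i - c j * u j.succ i)
      = ∑ r ∈ Fintype.piFinset (fun j : Fin n => ({j.castSucc, j.succ} : Finset (Fin (n+1)))),
          (∏ j : Fin n, coef j (r j)) * D r := by
    have hentry : (Matrix.of fun i j : Fin n => u j.castSucc i - c j * u j.succ i)
        = Matrix.of fun i j : Fin n =>
            ∑ t ∈ ({j.castSucc, j.succ} : Finset (Fin (n+1))), coef j t * u t i := by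
      ext i j
      rw [Matrix.of_apply, Matrix.of_apply,
        Finset.sum_pair (Fin.castSucc_lt_succ : j.castSucc < j.succ).ne]
      simp only [hcoef, if_neg (Fin.castSucc_lt_succ : j.castSucc < j.succ).ne, if_pos rfl]
      ring
    rw [hentry,
      det_as_rows n (fun j i => ∑ t ∈ ({j.castSucc, j.succ} : Finset (Fin (n+1))), coef j t * u t i)]
    have hml := (Matrix.detRowAlternating (R := F) (n := Fin n)).toMultilinearMap.map_sum_finset
      (fun (j : Fin n) (t : Fin (n+1)) => fun i => coef j t * u t i)
      (fun j : Fin n => ({j.castSucc, j.succ} : Finset (Fin (n+1))))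
    rw [show (fun j : Fin n => fun i =>
          ∑ t ∈ ({j.castSucc, j.succ} : Finset (Fin (n+1))), coef j t * u t i)
        = (fun j : Fin n =>
          ∑ t ∈ ({j.castSucc, j.succ} : Finset (Fin (n+1))), fun i => coef j t * u t i) from
        funext fun j => by ext i; simp, hml]
    refine Finset.sum_congr rfl fun r _ => ?_
    rw [← det_as_rows n (fun j i => coef j (r j) * u (r j) i)]
    rw [show (Matrix.of fun i j : Fin n => coef j (r j) * u (r j) i)
        = Matrix.of fun i j : Fin n => (fun j => coef j (r j)) j *
            ((Matrix.of fun i j : Fin n => u (r j) i) i j) from rfl,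
      Matrix.det_mul_row]
  rw [hx] at hRHS1
  rw [hRHS1, hRHS2, hRHS3, hRHS4]
  -- kill non-injective r, and reindex injective ones by the skipped value
  have hzero : ∀ r ∈ Fintype.piFinset
      (fun j : Fin n => ({j.castSucc, j.succ} : Finset (Fin (n+1)))),
      ¬ Function.Injective r → D r = 0 := by
    intro r _ hninj
    simp only [Function.Injective, not_forall] at hninj
    obtain ⟨j, j', hjj', hne⟩ := hninj
    simp only [hD]
    rw [← Matrix.det_transpose]
    refine Matrix.det_zero_of_row_eq hne ?_
    ext i
    simp [Matrix.transpose_apply, hjj']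
  have hfilter : ∑ r ∈ Fintype.piFinset
        (fun j : Fin n => ({j.castSucc, j.succ} : Finset (Fin (n+1)))),
        (∏ j : Fin n, coef j (r j)) * D r
      = ∑ r ∈ (Fintype.piFinset
          (fun j : Fin n => ({j.castSucc, j.succ} : Finset (Fin (n+1))))).filter
          (fun r => Function.Injective r),
        (∏ j : Fin n, coef j (r j)) * D r := by
    symm
    refine Finset.sum_subset (Finset.filter_subset _ _) ?_
    intro r hr hrn
    rw [hzero r hr (by simpa [Finset.mem_filter, hr] using hrn), mul_zero]
  have hbij : ∑ r ∈ (Fintype.piFinset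
          (fun j : Fin n => ({j.castSucc, j.succ} : Finset (Fin (n+1))))).filter
          (fun r => Function.Injective r),
        (∏ j : Fin n, coef j (r j)) * D r
      = ∑ m : Fin (n+1), (∏ j : Fin n, coef j (m.succAbove j)) * D m.succAbove := by
    symm
    refine Finset.sum_bij (fun m _ => (m.succAbove : Fin n → Fin (n+1))) ?_ ?_ ?_ ?_
    · intro m _
      rw [Finset.mem_filter]
      constructor
      · rw [Fintype.mem_piFinset]
        intro j
        show m.succAbove j ∈ ({j.castSucc, j.succ} : Finset (Fin (n+1)))
        rcases lt_or_ge j.castSucc m with h | h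
        · rw [Fin.succAbove_of_castSucc_lt _ _ h]; simp
        · rw [Fin.succAbove_of_le_castSucc _ _ h]; simp
      · exact Fin.succAbove_right_injective
    · intro m _ m' _ h
      exact Fin.succAbove_left_injective h
    · intro r hr
      rw [Finset.mem_filter, Fintype.mem_piFinset] at hr
      obtain ⟨m, hm⟩ := stair_classify n r
        (fun j => by have := hr.1 j; simpa [Finset.mem_insert, Finset.mem_singleton] using this)
        hr.2
      exact ⟨m, Finset.mem_univ m, hm.symm⟩
    · intro m _; rfl
  rw [hfilter, hbij, Finset.mul_sum]
  refine Finset.sum_congr rfl fun m _ => ?_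
  -- compute the coefficient product
  have hDM : D m.succAbove = M m := rfl
  have hcard : (Finset.filter (fun j : Fin n => m.1 ≤ j.1) Finset.univ).card = n - m.1 := by
    have h1 : Finset.filter (fun j : Fin n => m.1 ≤ j.1) Finset.univ
        = Finset.filter (fun j : Fin n => ¬ j.1 < m.1) Finset.univ := by
      ext j; simp only [mem_filter, mem_univ, true_and]; omega
    have h2 := Finset.card_filter_add_card_filter_not
      (s := (Finset.univ : Finset (Fin n))) (p := fun j : Fin n => j.1 < m.1)
    have h3 := card_filter_val_lt n m.1 (by omega)
    simp only [Finset.card_univ, Fintype.card_fin] at h2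
    rw [h1]
    omega
  have hprod : (∏ j : Fin n, coef j (m.succAbove j))
      = (-1 : F)^(n - m.1) * x^((lam m - lam (Fin.last n)) + (n - m.1)) := by
    rw [← Finset.prod_filter_mul_prod_filter_not Finset.univ (fun j : Fin n => m.1 ≤ j.1)]
    have hone : ∀ j ∈ Finset.filter (fun j : Fin n => ¬ m.1 ≤ j.1) Finset.univ,
        coef j (m.succAbove j) = 1 := by
      intro j hj
      simp only [mem_filter, mem_univ, true_and, not_le] at hj
      rw [Fin.succAbove_of_castSucc_lt _ _ (by simpa [Fin.lt_def] using hj)]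
      simp [hcoef, (Fin.castSucc_lt_succ : j.castSucc < j.succ).ne]
    have hneg : ∀ j ∈ Finset.filter (fun j : Fin n => m.1 ≤ j.1) Finset.univ,
        coef j (m.succAbove j) = -(x ^ (lam j.castSucc - lam j.succ + 1)) := by
      intro j hj
      simp only [mem_filter, mem_univ, true_and] at hj
      rw [Fin.succAbove_of_le_castSucc _ _ (by simpa [Fin.le_def] using hj)]
      simp [hcoef, hc]
    rw [Finset.prod_congr rfl hone, Finset.prod_const_one, mul_one,
      Finset.prod_congr rfl hneg]
    rw [show (fun j : Fin n => -(x ^ (lam j.castSucc - lam j.succ + 1)))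
        = fun j : Fin n => (-1 : F) * x ^ (lam j.castSucc - lam j.succ + 1) from
        funext fun j => by ring,
      Finset.prod_mul_distrib, Finset.prod_const, hcard,
      Finset.prod_pow_eq_pow_sum, telescope_sum n lam hlam m]
  rw [hDM, hprod]
  have hml : lam (Fin.last n) ≤ lam m := hlam _ _ (Fin.le_last m)
  have hmn : m.1 ≤ n := by omega
  have hsign : ((-1 : F))^(n + m.1) = (-1)^(n - m.1) := by
    rw [show n + m.1 = (n - m.1) + 2 * m.1 by omega, pow_add, pow_mul]
    simp
  rw [hsign]
  rw [show x ^ lam (Fin.last n) * ((-1:F) ^ (n - m.1)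
        * x ^ (lam m - lam (Fin.last n) + (n - m.1)) * M m)
      = (-1:F)^(n - m.1) * (x ^ lam (Fin.last n) * x ^ (lam m - lam (Fin.last n) + (n - m.1)))
        * M m from by ring,
    ← pow_add, show lam (Fin.last n) + (lam m - lam (Fin.last n) + (n - m.1)) = e m from by
      simp only [he]; omega]

end


section Main
variable {F : Type*} [CommRing F]

lemma pairs_split (n : ℕ) (f : Fin (n+1) → F) :
    (∏ p ∈ Finset.filter (fun p : Fin (n+1) × Fin (n+1) => p.1 < p.2) Finset.univ,
        (f p.1 - f p.2))
    = (∏ i : Fin n, (f i.castSucc - f (Fin.last n)))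
      * ∏ p ∈ Finset.filter (fun p : Fin n × Fin n => p.1 < p.2) Finset.univ,
          (f p.1.castSucc - f p.2.castSucc) := by
  classical
  have hS : Finset.filter (fun p : Fin (n+1) × Fin (n+1) => p.1 < p.2) Finset.univ
      = (Finset.image (fun i : Fin n => (i.castSucc, Fin.last n)) Finset.univ)
        ∪ (Finset.image (fun p : Fin n × Fin n => (p.1.castSucc, p.2.castSucc))
            (Finset.filter (fun p : Fin n × Fin n => p.1 < p.2) Finset.univ)) := by
    ext p
    simp only [Finset.mem_filter, Finset.mem_univ, true_and, Finset.mem_union, Finset.mem_image]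
    constructor
    · intro hp
      have hval := Fin.lt_def.mp hp
      by_cases h2 : p.2 = Fin.last n
      · left
        have h1 : p.1.1 < n := by
          rw [h2] at hval
          simpa using hval
        refine ⟨⟨p.1.1, h1⟩, Prod.ext ?_ h2.symm⟩
        ext; rfl
      · right
        have h2' : p.2.1 < n := by
          have hle := p.2.2
          have : p.2.1 ≠ n := fun h => h2 (by ext; simpa using h)
          omega
        have h1' : p.1.1 < n := lt_trans hval h2'
        refine ⟨(⟨p.1.1, h1'⟩, ⟨p.2.1, h2'⟩), Fin.mk_lt_mk.mpr hval, Prod.ext ?_ ?_⟩ <;>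
          (ext; rfl)
    · rintro (⟨i, hi⟩ | ⟨q, hq, hqe⟩)
      · rw [← hi]
        exact Fin.castSucc_lt_last i
      · rw [← hqe]
        exact Fin.castSucc_lt_castSucc_iff.mpr hq
  have hdisj : Disjoint
      (Finset.image (fun i : Fin n => (i.castSucc, Fin.last n)) Finset.univ)
      (Finset.image (fun p : Fin n × Fin n => (p.1.castSucc, p.2.castSucc))
        (Finset.filter (fun p : Fin n × Fin n => p.1 < p.2) Finset.univ)) := by
    rw [Finset.disjoint_left]
    rintro p hpA hpB
    simp only [Finset.mem_image, Finset.mem_univ, true_and] at hpA hpB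
    obtain ⟨i, hi⟩ := hpA
    obtain ⟨q, -, hq⟩ := hpB
    have h1 : p.2 = Fin.last n := by rw [← hi]
    have h2 : p.2 = q.2.castSucc := by rw [← hq]
    have := q.2.2
    rw [h1] at h2
    have := congrArg Fin.val h2
    simp only [Fin.val_last, Fin.coe_castSucc] at this
    omega
  rw [hS, Finset.prod_union hdisj,
    Finset.prod_image (fun a _ b _ hab => by
      have := congrArg Prod.fst hab
      simpa using Fin.castSucc_injective n this),
    Finset.prod_image (fun a _ b _ hab => by
      have h1 := congrArg Prod.fst hab
      have h2 := congrArg Prod.snd hab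
      simp only at h1 h2
      exact Prod.ext (Fin.castSucc_injective n h1) (Fin.castSucc_injective n h2))]

lemma schur_one (lam : Fin 1 → ℕ) (hlam : ∀ i j : Fin 1, i ≤ j → lam j ≤ lam i)
    (v : Fin 1 → F) : schurPoly 1 lam hlam v = v 0 ^ lam 0 := by
  classical
  rw [schurPoly_eq, Finset.univ_unique, Finset.sum_singleton]
  rw [if_pos ?_]
  · rw [Fin.prod_univ_one]
    have : ∀ c : Fin (lam 0), v ((default : (i : Fin 1) → Fin (lam i) → Fin 1) 0 c) = v 0 :=
      fun c => congrArg v (Subsingleton.elim _ _)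
    rw [Finset.prod_congr rfl (fun c _ => this c), Finset.prod_const]
    simp
  · constructor
    · intro i c c' _
      exact le_of_eq (Subsingleton.elim _ _)
    · intro i i' h c
      exfalso
      have := Fin.lt_def.mp h
      have := i.2
      have := i'.2
      omega

end Main

theorem stmt_15 {F : Type*} [Field F] [LinearOrder F] [IsStrictOrderedRing F] (k : ℕ) (hk : 0 < k)
    (v : Fin k → F) (hv : ∀ i j : Fin k, i < j → v j < v i)
    (lam : Fin k → ℕ) (hlam : ∀ i j : Fin k, i ≤ j → lam j ≤ lam i) :
    Matrix.det (Matrix.of fun i j : Fin k => v i ^ (lam j + (k - 1 - j.1))) =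
      (∏ p ∈ Finset.filter (fun p : Fin k × Fin k => p.1 < p.2) Finset.univ,
          (v p.1 - v p.2)) *
        schurPoly k lam hlam v := by
  obtain ⟨n, rfl⟩ : ∃ n, k = n + 1 := ⟨k - 1, by omega⟩
  clear hk
  induction n with
  | zero =>
    rw [Matrix.det_fin_one, schur_one lam hlam v]
    have hfe : Finset.filter (fun p : Fin 1 × Fin 1 => p.1 < p.2) Finset.univ = ∅ := by
      ext p
      simp only [Finset.mem_filter, Finset.mem_univ, true_and, Finset.notMem_empty, iff_false]
      intro h
      have := Fin.lt_def.mp h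
      have := p.1.2
      have := p.2.2
      omega
    rw [hfe, Finset.prod_empty, one_mul]
    simp
  | succ n ih =>
    simp only [Nat.add_sub_cancel]
    rw [detA (n+1) lam hlam v, schur_branch (n+1) lam hlam v, pairs_split (n+1) v]
    rw [Finset.mul_sum, Finset.mul_sum, Finset.mul_sum]
    refine Finset.sum_congr rfl fun mu hmu' => ?_
    rw [Fintype.mem_piFinset] at hmu'
    have hub : ∀ j : Fin (n+1), mu j ≤ lam j.castSucc := fun j => (Finset.mem_Icc.mp (hmu' j)).2
    have hlb : ∀ j : Fin (n+1), lam j.succ ≤ mu j := fun j => (Finset.mem_Icc.mp (hmu' j)).1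
    have hmu : ∀ i j : Fin (n+1), i ≤ j → mu j ≤ mu i := by
      intro i j hij
      rcases eq_or_lt_of_le hij with h | h
      · rw [h]
      · have h1 : i.succ ≤ j.castSucc := by
          rw [Fin.le_def]
          simp only [Fin.val_succ, Fin.coe_castSucc]
          exact Fin.lt_def.mp h
        calc mu j ≤ lam j.castSucc := hub j
          _ ≤ lam i.succ := hlam _ _ h1
          _ ≤ mu i := hlb i
    rw [dif_pos hmu]
    have hv' : ∀ i j : Fin (n+1), i < j → (fun i => v i.castSucc) j < (fun i => v i.castSucc) i :=
      fun i j h => hv _ _ (Fin.castSucc_lt_castSucc_iff.mpr h)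
    have ihm := ih (fun i => v i.castSucc) hv' mu hmu
    simp only [Nat.add_sub_cancel] at ihm ⊢
    rw [ihm]
    ring
end

section
/- Let M be an n×n invertible matrix over a field with inverse G = M⁻¹. Let I, J ⊆ {1,…,n} with |I| = |J| = k, and let Ī, J̄ denote their complements. Then det( G[I, J] ) = (−1)^{ΣI + ΣJ} · det( M[J̄, Ī] ) / det M, where G[I,J] is the submatrix of G with rows indexed by I and columns by J, M[J̄,Ī] is the submatrix of M with rows indexed by J̄ and columns by Ī, and ΣI, ΣJ are the sums of the elements of I and J. -/
open Equiv Finset Matrix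

private lemma nat_smono_id (f : ℕ → ℕ) (a b : ℕ)
    (hmono : ∀ i j, a ≤ i → i < j → j < b → f i < f j)
    (hrange : ∀ i, a ≤ i → i < b → a ≤ f i ∧ f i < b) :
    ∀ i, a ≤ i → i < b → f i = i := by
  have hlow : ∀ i, a ≤ i → i < b → i ≤ f i := by
    intro i
    induction i using Nat.strong_induction_on with
    | _ i ih =>
      intro hai hib
      rcases Nat.eq_or_lt_of_le hai with h | h
      · have := (hrange i hai hib).1; omega
      · have h1 := ih (i-1) (by omega) (by omega) (by omega)
        have h2 := hmono (i-1) i (by omega) (by omega) hib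
        omega
  have hshift : ∀ d i, a ≤ i → i + d < b → f i + d ≤ f (i + d) := by
    intro d
    induction d with
    | zero => intro i _ _; simp
    | succ d ih =>
      intro i hai hdb
      have h1 := ih i hai (by omega)
      have h2 := hmono (i+d) (i+d+1) (by omega) (by omega) (by omega)
      have h3 : f (i + (d+1)) = f (i+d+1) := rfl
      omega
  intro i hai hib
  have h1 := hlow i hai hib
  have h2 := hshift (b - 1 - i) i hai (by omega)
  have e : i + (b - 1 - i) = b - 1 := by omega
  rw [e] at h2
  have h3 := (hrange (b-1) (by omega) (by omega)).2
  omega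

private lemma card_filter_val_lt_s16 (n m : ℕ) (h : m ≤ n) :
    (Finset.univ.filter fun i : Fin n => (i : ℕ) < m).card = m := by
  have he : (Finset.univ.filter fun i : Fin n => (i : ℕ) < m) =
      (Finset.range m).attachFin (fun a ha => lt_of_lt_of_le (Finset.mem_range.mp ha) h) := by
    ext x
    simp [Finset.mem_attachFin]
  rw [he, Finset.card_attachFin, Finset.card_range]

private lemma sign_shuffle (n k : ℕ) (hk : k ≤ n) :
    ∀ (N : ℕ) (σ : Equiv.Perm (Fin n)),
    (∀ x y : Fin n, (y : ℕ) < k → x < y → σ x < σ y) →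
    (∀ x y : Fin n, k ≤ (x : ℕ) → x < y → σ x < σ y) →
    (∑ i ∈ Finset.univ.filter (fun i : Fin n => (i : ℕ) < k), (σ i : ℕ)) = N →
    Equiv.Perm.sign σ =
      (-1) ^ (∑ i ∈ Finset.univ.filter (fun i : Fin n => (i : ℕ) < k), ((σ i : ℕ) + (i : ℕ))) := by
  intro N
  induction N using Nat.strong_induction_on with
  | _ N ih =>
  intro σ h1 h2 hN
  set s : Finset (Fin n) := Finset.univ.filter (fun i : Fin n => (i : ℕ) < k) with hs
  have hmem : ∀ x : Fin n, x ∈ s ↔ (x : ℕ) < k := by intro x; simp [hs]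
  by_cases hbase : ∀ x : Fin n, (x : ℕ) < k →
      (σ x : ℕ) = 0 ∨ ∃ y : Fin n, (y : ℕ) < k ∧ (σ y : ℕ) + 1 = (σ x : ℕ)
  · -- base case : σ = 1
    set A : Finset (Fin n) := s.image σ with hA
    have hcards : s.card = k := card_filter_val_lt_s16 n k hk
    have hcardA : A.card = k := by
      rw [hA, Finset.card_image_of_injective _ σ.injective, hcards]
    -- A is downward closed, hence each element < k
    have hdc : ∀ v : ℕ, ∀ x ∈ A, (x : ℕ) = v → ∀ w : Fin n, (w : ℕ) ≤ v → w ∈ A := by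
      intro v
      induction v using Nat.strong_induction_on with
      | _ v ihv =>
        intro x hx hxv w hw
        rcases Nat.eq_or_lt_of_le hw with h | h
        · have : w = x := Fin.ext (by omega)
          rwa [this]
        · obtain ⟨y, hy, hyx⟩ := Finset.mem_image.mp hx
          rcases hbase y ((hmem y).mp hy) with h0 | ⟨z, hz, hz1⟩
          · rw [hyx] at h0; omega
          · rw [hyx] at hz1
            have hzA : σ z ∈ A := Finset.mem_image_of_mem σ ((hmem z).mpr hz)
            exact ihv (v-1) (by omega) (σ z) hzA (by omega) w (by omega)
    have hAlt : ∀ x ∈ A, (x : ℕ) < k := by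
      intro x hx
      have hsub : (Finset.univ.filter fun w : Fin n => (w : ℕ) < (x:ℕ)+1) ⊆ A := by
        intro w hw
        simp only [Finset.mem_filter, Finset.mem_univ, true_and] at hw
        exact hdc (x : ℕ) x hx rfl w (by omega)
      have := Finset.card_le_card hsub
      rw [card_filter_val_lt_s16 n ((x:ℕ)+1) x.isLt, hcardA] at this
      omega
    have hAeq : A = s := by
      apply Finset.eq_of_subset_of_card_le
      · intro x hx; exact (hmem x).mpr (hAlt x hx)
      · rw [hcardA, hcards]
    -- σ = 1
    have hid : σ = 1 := by
      set f : ℕ → ℕ := fun i => if h : i < n then ((σ ⟨i, h⟩ : Fin n) : ℕ) else i with hf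
      have hfeq : ∀ (i : ℕ) (h : i < n), f i = ((σ ⟨i, h⟩ : Fin n) : ℕ) := by
        intro i h; rw [hf]; exact dif_pos h
      have hfval : ∀ x : Fin n, f (x : ℕ) = (σ x : ℕ) := fun x => hfeq _ x.isLt
      have hlowblock : ∀ i, 0 ≤ i → i < k → f i = i := by
        apply nat_smono_id
        · intro i j _ hij hjk
          have hi : i < n := by omega
          have hj : j < n := by omega
          have := h1 ⟨i, hi⟩ ⟨j, hj⟩ hjk (Fin.mk_lt_mk.mpr hij)
          rw [hfeq i hi, hfeq j hj]
          exact Fin.lt_def.mp this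
        · intro i _ hik
          have hi : i < n := by omega
          refine ⟨Nat.zero_le _, ?_⟩
          have hmemA : σ ⟨i, hi⟩ ∈ A :=
            Finset.mem_image_of_mem σ ((hmem _).mpr hik)
          rw [hfeq i hi]
          exact hAlt _ hmemA
      have hhighblock : ∀ i, k ≤ i → i < n → f i = i := by
        apply nat_smono_id
        · intro i j hki hij hjn
          have hi : i < n := by omega
          have := h2 ⟨i, hi⟩ ⟨j, hjn⟩ hki (Fin.mk_lt_mk.mpr hij)
          rw [hfeq i hi, hfeq j hjn]
          exact Fin.lt_def.mp this
        · intro i hki hin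
          refine ⟨?_, by rw [hfeq i hin]; exact (σ ⟨i, hin⟩).isLt⟩
          rw [hfeq i hin]
          by_contra hcon
          push_neg at hcon
          have hmemA : σ ⟨i, hin⟩ ∈ A := by
            rw [hAeq]; exact (hmem _).mpr hcon
          obtain ⟨y, hy, hyx⟩ := Finset.mem_image.mp hmemA
          have hyi : y = ⟨i, hin⟩ := σ.injective hyx
          rw [hyi] at hy
          have := (hmem _).mp hy
          simp only [Fin.val_mk] at this
          omega
      ext x
      have hx := x.isLt
      by_cases hxk : (x : ℕ) < k
      · have := hlowblock (x : ℕ) (Nat.zero_le _) hxk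
        rw [hfval] at this
        simpa using this
      · have := hhighblock (x : ℕ) (by omega) hx
        rw [hfval] at this
        simpa using this
    rw [hid]
    have heven : Even (∑ i ∈ s, (((1 : Equiv.Perm (Fin n)) i : ℕ) + (i : ℕ))) := by
      refine ⟨∑ i ∈ s, (i : ℕ), ?_⟩
      rw [← Finset.sum_add_distrib]
      apply Finset.sum_congr rfl
      intro x _; simp
    rw [Equiv.Perm.sign_one, heven.neg_one_pow]
  · -- inductive step
    push_neg at hbase
    obtain ⟨x, hxk, hx0, hxpred⟩ := hbase
    set a : Fin n := σ x with ha
    have ha0 : 0 < (a : ℕ) := Nat.pos_of_ne_zero hx0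
    set a' : Fin n := ⟨(a : ℕ) - 1, by omega⟩ with ha'
    have hval : (a' : ℕ) = (a : ℕ) - 1 := rfl
    have haa' : a' ≠ a := by
      rw [ne_eq, Fin.ext_iff, hval]; omega
    have hnota' : ∀ y : Fin n, (y : ℕ) < k → σ y ≠ a' := by
      intro y hy hcon
      exact hxpred y hy (by rw [hcon, hval]; omega)
    have hnota : ∀ y : Fin n, y ≠ x → σ y ≠ a := by
      intro y hy hcon
      exact hy (σ.injective (hcon.trans ha))
    set σ' : Equiv.Perm (Fin n) := Equiv.swap a a' * σ with hσ'
    have hσ'x : σ' x = a' := by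
      simp [hσ', ← ha, Equiv.swap_apply_left]
    have hσ'eq : ∀ y : Fin n, σ y ≠ a → σ y ≠ a' → σ' y = σ y := by
      intro y hya hya'
      simp [hσ', Equiv.swap_apply_of_ne_of_ne hya hya']
    -- monotonicity for σ'
    have h1' : ∀ u v : Fin n, (v : ℕ) < k → u < v → σ' u < σ' v := by
      intro u v hv huv
      have huk : (u : ℕ) < k := lt_trans (by exact_mod_cast huv) hv
      have hm := h1 u v hv huv
      by_cases hu : u = x
      · subst hu
        rw [hσ'x, hσ'eq v (hnota v (ne_of_gt huv)) (hnota' v hv)]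
        rw [← ha] at hm
        exact lt_trans (by rw [Fin.lt_def, hval]; omega) hm
      · by_cases hvx : v = x
        · subst hvx
          rw [hσ'x, hσ'eq u (hnota u hu) (hnota' u huk)]
          have h3 : (σ u : ℕ) ≠ (a : ℕ) - 1 :=
            fun hc => hnota' u huk (Fin.ext (hc.trans hval.symm))
          rw [← ha] at hm
          rw [Fin.lt_def] at hm ⊢
          rw [hval]
          omega
        · rw [hσ'eq u (hnota u hu) (hnota' u huk), hσ'eq v (hnota v hvx) (hnota' v hv)]
          exact hm
    have h2' : ∀ u v : Fin n, k ≤ (u : ℕ) → u < v → σ' u < σ' v := by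
      intro u v hu huv
      have hvk : k ≤ (v : ℕ) := le_trans hu (le_of_lt (by exact_mod_cast huv))
      have hm := h2 u v hu huv
      have hux : u ≠ x := fun h => by rw [h] at hu; omega
      have hvx : v ≠ x := fun h => by rw [h] at hvk; omega
      have hua := hnota u hux
      have hva := hnota v hvx
      by_cases hu' : σ u = a'
      · have hσ'u : σ' u = a := by simp [hσ', hu', Equiv.swap_apply_right]
        have hv' : σ v ≠ a' := by
          intro hc
          rw [hu', hc] at hm
          exact lt_irrefl _ hm
        rw [hσ'u, hσ'eq v hva hv']
        rw [hu'] at hm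
        rw [Fin.lt_def] at hm ⊢
        rw [hval] at hm
        have : (σ v : ℕ) ≠ (a : ℕ) := fun hc => hva (Fin.ext hc)
        omega
      · by_cases hv' : σ v = a'
        · have hσ'v : σ' v = a := by simp [hσ', hv', Equiv.swap_apply_right]
          rw [hσ'v, hσ'eq u hua hu']
          rw [hv'] at hm
          rw [Fin.lt_def] at hm ⊢
          rw [hval] at hm
          omega
        · rw [hσ'eq u hua hu', hσ'eq v hva hv']
          exact hm
    -- sums
    have hxs : x ∈ s := (hmem x).mpr hxk
    have herase : ∀ y ∈ s.erase x, σ' y = σ y := by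
      intro y hy
      obtain ⟨hyx, hys⟩ := Finset.mem_erase.mp hy
      exact hσ'eq y (hnota y hyx) (hnota' y ((hmem y).mp hys))
    have hsum : (∑ i ∈ s, (σ' i : ℕ)) + 1 = ∑ i ∈ s, (σ i : ℕ) := by
      rw [← Finset.add_sum_erase s (fun i => ((σ' i : ℕ))) hxs,
        ← Finset.add_sum_erase s (fun i => ((σ i : ℕ))) hxs,
        Finset.sum_congr rfl (fun y hy => congrArg _ (herase y hy))]
      have e1 : (σ' x : ℕ) = (a : ℕ) - 1 := by rw [hσ'x, hval]
      have e2 : (σ x : ℕ) = (a : ℕ) := by rw [← ha]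
      omega
    have hlt : (∑ i ∈ s, (σ' i : ℕ)) < N := by omega
    have hind := ih _ hlt σ' h1' h2' rfl
    -- combine
    have hsplit : ∀ τ : Equiv.Perm (Fin n),
        (∑ i ∈ s, ((τ i : ℕ) + (i : ℕ))) = (∑ i ∈ s, (τ i : ℕ)) + ∑ i ∈ s, (i : ℕ) :=
      fun τ => Finset.sum_add_distrib
    have hsign : Equiv.Perm.sign σ = - Equiv.Perm.sign σ' := by
      rw [hσ', Equiv.Perm.sign_mul, Equiv.Perm.sign_swap haa'.symm]
      simp
    rw [hsign, hind, hsplit, hsplit,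
      show (∑ i ∈ s, (σ i : ℕ)) = (∑ i ∈ s, (σ' i : ℕ)) + 1 from hsum.symm,
      show (∑ i ∈ s, (σ' i : ℕ)) + 1 + ∑ i ∈ s, (i : ℕ)
          = ((∑ i ∈ s, (σ' i : ℕ)) + ∑ i ∈ s, (i : ℕ)) + 1 by omega,
      pow_succ]
    rw [mul_neg_one]

private lemma block_inv {m p : Type*} [DecidableEq m] [Fintype m] [DecidableEq p] [Fintype p]
    {K : Type*} [Field K] (N : Matrix (m ⊕ p) (m ⊕ p) K) (hN : IsUnit N.det) :
    (N⁻¹.toBlocks₁₁).det * N.det = (N.toBlocks₂₂).det := by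
  set G := N⁻¹ with hG
  have hNG : N * G = 1 := Matrix.mul_nonsing_inv N hN
  have hsplit : fromBlocks (N.toBlocks₁₁ * G.toBlocks₁₁ + N.toBlocks₁₂ * G.toBlocks₂₁)
      (N.toBlocks₁₁ * G.toBlocks₁₂ + N.toBlocks₁₂ * G.toBlocks₂₂)
      (N.toBlocks₂₁ * G.toBlocks₁₁ + N.toBlocks₂₂ * G.toBlocks₂₁)
      (N.toBlocks₂₁ * G.toBlocks₁₂ + N.toBlocks₂₂ * G.toBlocks₂₂)
      = fromBlocks 1 0 0 1 := by
    rw [← fromBlocks_multiply, fromBlocks_toBlocks, fromBlocks_toBlocks, hNG, fromBlocks_one]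
  have h11 : N.toBlocks₁₁ * G.toBlocks₁₁ + N.toBlocks₁₂ * G.toBlocks₂₁ = 1 := by
    have := congrArg Matrix.toBlocks₁₁ hsplit
    simp only [Matrix.toBlocks_fromBlocks₁₁] at this
    exact this
  have h21 : N.toBlocks₂₁ * G.toBlocks₁₁ + N.toBlocks₂₂ * G.toBlocks₂₁ = 0 := by
    have := congrArg Matrix.toBlocks₂₁ hsplit
    simp only [Matrix.toBlocks_fromBlocks₂₁] at this
    exact this
  have key : N * fromBlocks G.toBlocks₁₁ 0 G.toBlocks₂₁ 1
      = fromBlocks 1 N.toBlocks₁₂ 0 N.toBlocks₂₂ := by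
    conv_lhs => rw [← fromBlocks_toBlocks N]
    rw [fromBlocks_multiply]
    rw [Matrix.mul_zero, Matrix.mul_one, Matrix.mul_zero, Matrix.mul_one, h11, h21]
    rw [zero_add, zero_add]
  have hdet := congrArg Matrix.det key
  rw [Matrix.det_mul, Matrix.det_fromBlocks_zero₁₂, Matrix.det_fromBlocks_zero₂₁,
    Matrix.det_one, Matrix.det_one, mul_one, one_mul] at hdet
  rw [mul_comm]
  exact hdet

private lemma shuffle_sign {n k : ℕ} (hkn : k ≤ n) (I : Finset (Fin n)) (hI : I.card = k)
    (hIc : Iᶜ.card = n - k) :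
    ∃ e : (Fin k ⊕ Fin (n - k)) ≃ Fin n,
      (∀ i : Fin k, e (Sum.inl i) = (I.orderIsoOfFin hI i : Fin n)) ∧
      (∀ j : Fin (n - k), e (Sum.inr j) = (Iᶜ.orderIsoOfFin hIc j : Fin n)) ∧
      Equiv.Perm.sign
          (((finSumFinEquiv.trans (finCongr (Nat.add_sub_cancel' hkn))).symm).trans e) =
        (-1) ^ ((∑ a ∈ I, (a : ℕ)) +
          ∑ i ∈ Finset.univ.filter (fun i : Fin n => (i : ℕ) < k), (i : ℕ)) := by
  set e : (Fin k ⊕ Fin (n - k)) ≃ Fin n :=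
    (Equiv.sumCongr (I.orderIsoOfFin hI).toEquiv
      ((Iᶜ.orderIsoOfFin hIc).toEquiv.trans
        (Equiv.subtypeEquivRight (fun x => Finset.mem_compl)))).trans
      (Equiv.sumCompl (· ∈ I)) with he
  have heL : ∀ i : Fin k, e (Sum.inl i) = (I.orderIsoOfFin hI i : Fin n) := by
    intro i; simp [he]
  have heR : ∀ j : Fin (n - k), e (Sum.inr j) = (Iᶜ.orderIsoOfFin hIc j : Fin n) := by
    intro j; simp [he]
  set h : (Fin k ⊕ Fin (n - k)) ≃ Fin n :=
    finSumFinEquiv.trans (finCongr (Nat.add_sub_cancel' hkn)) with hh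
  set π : Equiv.Perm (Fin n) := h.symm.trans e with hπ
  have hsymm1 : ∀ (x : Fin n) (hx : (x : ℕ) < k), h.symm x = Sum.inl ⟨(x : ℕ), hx⟩ := by
    intro x hx
    rw [Equiv.symm_apply_eq]
    apply Fin.ext
    simp [hh]
  have hsymm2 : ∀ (x : Fin n) (hx : k ≤ (x : ℕ)),
      h.symm x = Sum.inr ⟨(x : ℕ) - k, by have := x.isLt; omega⟩ := by
    intro x hx
    rw [Equiv.symm_apply_eq]
    apply Fin.ext
    simp [hh]
    omega
  have hπ1 : ∀ (x : Fin n) (hx : (x : ℕ) < k),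
      π x = (I.orderIsoOfFin hI ⟨(x : ℕ), hx⟩ : Fin n) := by
    intro x hx
    show e (h.symm x) = _
    rw [hsymm1 x hx, heL]
  have hπ2 : ∀ (x : Fin n) (hx : k ≤ (x : ℕ)),
      π x = (Iᶜ.orderIsoOfFin hIc ⟨(x : ℕ) - k, by have := x.isLt; omega⟩ : Fin n) := by
    intro x hx
    show e (h.symm x) = _
    rw [hsymm2 x hx, heR]
  have h1 : ∀ x y : Fin n, (y : ℕ) < k → x < y → π x < π y := by
    intro x y hy hxy
    have hx : (x : ℕ) < k := lt_trans (by exact_mod_cast hxy) hy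
    rw [hπ1 x hx, hπ1 y hy]
    exact Subtype.coe_lt_coe.mpr ((I.orderIsoOfFin hI).lt_iff_lt.mpr
      (Fin.mk_lt_mk.mpr (by exact_mod_cast hxy)))
  have h2 : ∀ x y : Fin n, k ≤ (x : ℕ) → x < y → π x < π y := by
    intro x y hx hxy
    have hy : k ≤ (y : ℕ) := le_trans hx (le_of_lt (by exact_mod_cast hxy))
    rw [hπ2 x hx, hπ2 y hy]
    refine Subtype.coe_lt_coe.mpr ((Iᶜ.orderIsoOfFin hIc).lt_iff_lt.mpr
      (Fin.mk_lt_mk.mpr ?_))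
    have := Fin.lt_def.mp hxy
    omega
  have hfilter : Finset.univ.filter (fun i : Fin n => (i : ℕ) < k)
      = (Finset.univ : Finset (Fin k)).map (Fin.castLEEmb hkn) := by
    ext x
    simp only [Finset.mem_filter, Finset.mem_univ, true_and, Finset.mem_map]
    constructor
    · intro hx
      exact ⟨⟨(x : ℕ), hx⟩, Fin.ext rfl⟩
    · rintro ⟨i, rfl⟩
      simpa using i.isLt
  have hcast : ∀ i : Fin k, ((Fin.castLEEmb hkn i : Fin n) : ℕ) < k := fun i => i.isLt
  have hchange : ∀ f : Fin n → ℕ,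
      (∑ i ∈ Finset.univ.filter (fun i : Fin n => (i : ℕ) < k), f i)
      = ∑ i : Fin k, f (Fin.castLEEmb hkn i) := by
    intro f
    rw [hfilter, Finset.sum_map]
  have hsum : (∑ i ∈ Finset.univ.filter (fun i : Fin n => (i : ℕ) < k), (π i : ℕ))
      = ∑ a ∈ I, (a : ℕ) := by
    rw [hchange]
    have h1 : ∀ i : Fin k, ((π (Fin.castLEEmb hkn i) : Fin n) : ℕ)
        = ((I.orderIsoOfFin hI i : Fin n) : ℕ) := by
      intro i
      rw [hπ1 _ (hcast i)]
      congr 1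
    rw [Finset.sum_congr rfl (fun i _ => h1 i)]
    rw [show (∑ i : Fin k, ((I.orderIsoOfFin hI i : Fin n) : ℕ))
        = ∑ x : {x : Fin n // x ∈ I}, ((x : Fin n) : ℕ) from
      Equiv.sum_comp (I.orderIsoOfFin hI).toEquiv (fun x : {x : Fin n // x ∈ I} => ((x : Fin n) : ℕ))]
    exact Finset.sum_coe_sort I (fun a => ((a : Fin n) : ℕ))
  refine ⟨e, heL, heR, ?_⟩
  have hsgn := sign_shuffle n k hkn _ π h1 h2 rfl
  rw [hsgn, Finset.sum_add_distrib, hsum]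

theorem stmt_16 {K : Type*} [Field K] (n k : ℕ) (M : Matrix (Fin n) (Fin n) K)
    (hM : IsUnit M.det) (I J : Finset (Fin n)) (hI : I.card = k) (hJ : J.card = k)
    (hIc : Iᶜ.card = n - k) (hJc : Jᶜ.card = n - k) :
    Matrix.det ((M⁻¹).submatrix
        (fun a : Fin k => (I.orderIsoOfFin hI a : Fin n))
        (fun b : Fin k => (J.orderIsoOfFin hJ b : Fin n))) =
      (-1 : K) ^ ((∑ i ∈ I, (i : ℕ)) + ∑ j ∈ J, (j : ℕ)) *
        Matrix.det (M.submatrix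
          (fun a : Fin (n - k) => (Jᶜ.orderIsoOfFin hJc a : Fin n))
          (fun b : Fin (n - k) => (Iᶜ.orderIsoOfFin hIc b : Fin n))) /
        M.det := by
  have hkn : k ≤ n := by
    have h1 := Finset.card_le_univ I
    rw [hI] at h1; simpa using h1
  obtain ⟨eI, hIL, hIR, hIsign⟩ := shuffle_sign hkn I hI hIc
  obtain ⟨eJ, hJL, hJR, hJsign⟩ := shuffle_sign hkn J hJ hJc
  set h : (Fin k ⊕ Fin (n - k)) ≃ Fin n :=
    finSumFinEquiv.trans (finCongr (Nat.add_sub_cancel' hkn)) with hh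
  set πI : Equiv.Perm (Fin n) := h.symm.trans eI with hπI
  set πJ : Equiv.Perm (Fin n) := h.symm.trans eJ with hπJ
  set T : ℕ := ∑ i ∈ Finset.univ.filter (fun i : Fin n => (i : ℕ) < k), (i : ℕ) with hT
  set N : Matrix (Fin k ⊕ Fin (n - k)) (Fin k ⊕ Fin (n - k)) K := M.submatrix eJ eI with hN
  -- determinant of N
  have hdetN : N.det = ((Equiv.Perm.sign πJ : ℤ) : K) * ((Equiv.Perm.sign πI : ℤ) : K) * M.det := by
    have e1 : N.submatrix h.symm h.symm = M.submatrix (⇑πJ) (⇑πI) := by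
      rw [hN, Matrix.submatrix_submatrix]
      rfl
    have e2 : (N.submatrix h.symm h.symm).det = N.det :=
      Matrix.det_submatrix_equiv_self h.symm N
    have e3 : M.submatrix (⇑πJ) (⇑πI) = (M.submatrix id (⇑πI)).submatrix (⇑πJ) id := by
      rw [Matrix.submatrix_submatrix]
      rfl
    rw [← e2, e1, e3, Matrix.det_permute, Matrix.det_permute', mul_assoc]
  have hsI : ((Equiv.Perm.sign πI : ℤ) : K) = (-1 : K) ^ ((∑ a ∈ I, (a : ℕ)) + T) := by
    rw [hπI, hIsign]; simp
  have hsJ : ((Equiv.Perm.sign πJ : ℤ) : K) = (-1 : K) ^ ((∑ a ∈ J, (a : ℕ)) + T) := by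
    rw [hπJ, hJsign]; simp
  have hNunit : IsUnit N.det := by
    rw [hdetN, hsI, hsJ]
    exact ((isUnit_one.neg.pow _).mul (isUnit_one.neg.pow _)).mul hM
  have hblock := block_inv N hNunit
  -- identify the blocks
  have hB11 : N⁻¹.toBlocks₁₁ = (M⁻¹).submatrix
      (fun a : Fin k => (I.orderIsoOfFin hI a : Fin n))
      (fun b : Fin k => (J.orderIsoOfFin hJ b : Fin n)) := by
    have hNinv : N⁻¹ = (M⁻¹).submatrix eI eJ := by
      rw [hN, show M.submatrix ⇑eJ ⇑eI = (Matrix.reindex eJ.symm eI.symm) M by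
        rw [Matrix.reindex_apply]; simp,
        Matrix.inv_reindex, Matrix.reindex_apply]
      simp
    ext a b
    rw [hNinv]
    simp only [Matrix.toBlocks₁₁, Matrix.submatrix_apply, Matrix.of_apply]
    rw [hIL, hJL]
  have hB22 : N.toBlocks₂₂ = M.submatrix
      (fun a : Fin (n - k) => (Jᶜ.orderIsoOfFin hJc a : Fin n))
      (fun b : Fin (n - k) => (Iᶜ.orderIsoOfFin hIc b : Fin n)) := by
    ext a b
    simp only [hN, Matrix.toBlocks₂₂, Matrix.submatrix_apply, Matrix.of_apply]
    rw [hJR, hIR]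
  rw [hB11, hB22] at hblock
  -- final algebraic manipulation
  set X : K := Matrix.det ((M⁻¹).submatrix
      (fun a : Fin k => (I.orderIsoOfFin hI a : Fin n))
      (fun b : Fin k => (J.orderIsoOfFin hJ b : Fin n))) with hX
  set Y : K := Matrix.det (M.submatrix
      (fun a : Fin (n - k) => (Jᶜ.orderIsoOfFin hJc a : Fin n))
      (fun b : Fin (n - k) => (Iᶜ.orderIsoOfFin hIc b : Fin n))) with hY
  set E : ℕ := (∑ i ∈ I, (i : ℕ)) + ∑ j ∈ J, (j : ℕ) with hE
  have hdM : M.det ≠ 0 := hM.ne_zero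
  rw [eq_div_iff hdM]
  rw [hdetN, hsI, hsJ] at hblock
  set c : K := (-1 : K) ^ ((∑ a ∈ J, (a : ℕ)) + T) * (-1 : K) ^ ((∑ a ∈ I, (a : ℕ)) + T) with hc
  have hc1 : c * (-1 : K) ^ E = 1 := by
    rw [hc, ← pow_add, ← pow_add]
    apply Even.neg_one_pow
    exact ⟨(∑ i ∈ I, (i : ℕ)) + (∑ j ∈ J, (j : ℕ)) + T, by omega⟩
  calc X * M.det = X * M.det * (c * (-1 : K) ^ E) := by rw [hc1, mul_one]
    _ = (X * (c * M.det)) * (-1 : K) ^ E := by ring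
    _ = Y * (-1 : K) ^ E := by rw [hblock]
    _ = (-1 : K) ^ E * Y := mul_comm _ _
end

section
/- For k = 1, the watermelon probability near the open boundary reduces to: lim_{r→∞} r² · ( g(r,0) − g(r,2) ) = 1/π, where g(m,n) = (1/(2π²)) ∫₀^π ∫₀^π (cos mα cos nβ − 1)/(2 − cos α − cos β) dα dβ. -/
noncomputable def latticeGreen (m n : ℤ) : ℝ :=
  (1 / (2 * Real.pi ^ 2)) *
    ∫ a in (0:ℝ)..Real.pi, ∫ b in (0:ℝ)..Real.pi,
      (Real.cos ((m : ℝ) * a) * Real.cos ((n : ℝ) * b) - 1) /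
        (2 - Real.cos a - Real.cos b)

open Real intervalIntegral MeasureTheory Set Filter
open scoped ContDiff
open scoped Interval

lemma intA {a : ℝ} (ha : 1 < a) :
    ∫ β in (0:ℝ)..π, (a - Real.cos β)⁻¹ = π / Real.sqrt (a^2 - 1) := by
  have hs2 : (0:ℝ) < a^2 - 1 := by nlinarith
  set s := Real.sqrt (a^2 - 1) with hs_def
  have hs : 0 < s := Real.sqrt_pos.mpr hs2
  have hss : s^2 = a^2 - 1 := Real.sq_sqrt hs2.le
  have hden : ∀ x : ℝ, 0 < a - Real.cos x := fun x => by
    have := Real.cos_le_one x; linarith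
  set F : ℝ → ℝ := fun β => Real.arccos ((a * Real.cos β - 1) / (a - Real.cos β)) / s with hF
  have hcont : ContinuousOn F (Icc 0 π) := by
    apply Continuous.continuousOn
    exact (Real.continuous_arccos.comp ((continuous_const.mul Real.continuous_cos |>.sub
      continuous_const).div (continuous_const.sub Real.continuous_cos)
      (fun x => (hden x).ne'))).div_const s
  have hderiv : ∀ x ∈ Ioo (0:ℝ) π, HasDerivWithinAt F ((a - Real.cos x)⁻¹) (Ioi x) x := by
    intro x hx
    have hcx1 : Real.cos x < 1 := by
      have := Real.strictAntiOn_cos (left_mem_Icc.mpr Real.pi_pos.le)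
        ⟨hx.1.le, hx.2.le⟩ hx.1
      simpa using this
    have hcx2 : -1 < Real.cos x := by
      have := Real.strictAntiOn_cos ⟨hx.1.le, hx.2.le⟩
        (right_mem_Icc.mpr Real.pi_pos.le) hx.2
      simpa using this
    have hsx : 0 < Real.sin x := Real.sin_pos_of_pos_of_lt_pi hx.1 hx.2
    set u : ℝ → ℝ := fun β => (a * Real.cos β - 1) / (a - Real.cos β) with hu_def
    have hdx := (hden x).ne'
    have hune1 : u x ≠ 1 := by
      simp only [hu_def]
      intro h
      rw [div_eq_one_iff_eq hdx] at h; nlinarith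
    have hune : u x ≠ -1 := by
      simp only [hu_def]
      intro h
      rw [div_eq_iff hdx] at h; nlinarith
    have hu : HasDerivAt u
        (-(Real.sin x) * (a^2 - 1) / (a - Real.cos x)^2) x := by
      have h1 : HasDerivAt (fun β => a * Real.cos β - 1) (a * (-Real.sin x)) x :=
        ((Real.hasDerivAt_cos x).const_mul a).sub_const 1
      have h2 : HasDerivAt (fun β => a - Real.cos β) (Real.sin x) x := by
        simpa using ((Real.hasDerivAt_cos x).const_sub a)
      have := h1.div h2 hdx
      refine this.congr_deriv ?_
      symm
      field_simp
      ring
    have harc := (Real.hasDerivAt_arccos hune hune1).comp x hu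
    have hsqrt : Real.sqrt (1 - u x ^ 2) = s * Real.sin x / (a - Real.cos x) := by
      have h1 : 1 - u x ^ 2 = (s * Real.sin x / (a - Real.cos x))^2 := by
        simp only [hu_def]
        field_simp
        nlinarith [Real.sin_sq_add_cos_sq x, hss]
      rw [h1, Real.sqrt_sq (div_nonneg (mul_nonneg hs.le hsx.le) (hden x).le)]
    have : HasDerivAt F ((a - Real.cos x)⁻¹) x := by
      have := harc.div_const s
      refine this.congr_deriv ?_
      symm
      rw [hsqrt]
      field_simp
      linear_combination hss
    exact this.hasDerivWithinAt
  have hint : IntervalIntegrable (fun x => (a - Real.cos x)⁻¹) volume 0 π :=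
    (Continuous.continuousOn (by
      exact (continuous_const.sub Real.continuous_cos).inv₀ (fun x => (hden x).ne'))).intervalIntegrable
  have := intervalIntegral.integral_eq_sub_of_hasDeriv_right_of_le Real.pi_pos.le hcont hderiv hint
  rw [this]
  simp only [hF]
  rw [Real.cos_zero, Real.cos_pi]
  have h1 : (a * 1 - 1) / (a - 1) = 1 := by
    rw [div_eq_one_iff_eq (by linarith)]; ring
  have h2 : (a * (-1) - 1) / (a - (-1)) = -1 := by
    rw [div_eq_iff (by linarith)]; ring
  rw [h1, h2, Real.arccos_one, Real.arccos_neg_one]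
  field_simp
  ring

lemma intB {a : ℝ} (ha : 1 < a) :
    ∫ β in (0:ℝ)..π, (Real.cos (2*β) - 1) / (a - Real.cos β)
      = 2*π*Real.sqrt (a^2-1) - 2*π*a := by
  have hs2 : (0:ℝ) < a^2 - 1 := by nlinarith
  have hss : (Real.sqrt (a^2-1))^2 = a^2 - 1 := Real.sq_sqrt hs2.le
  have hden : ∀ x : ℝ, 0 < a - Real.cos x := fun x => by
    have := Real.cos_le_one x; linarith
  have heq : ∀ β : ℝ, (Real.cos (2*β) - 1) / (a - Real.cos β)
      = (-2*a - 2*Real.cos β) + (2*(a^2-1)) * (a - Real.cos β)⁻¹ := by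
    intro β
    have hne : a - Real.cos β ≠ 0 := (hden β).ne'
    rw [Real.cos_two_mul]
    field_simp
    ring
  rw [intervalIntegral.integral_congr (fun β _ => heq β)]
  have hint1 : IntervalIntegrable (fun β => -2*a - 2*Real.cos β) volume 0 π :=
    (Continuous.continuousOn (by continuity)).intervalIntegrable
  have hint2 : IntervalIntegrable (fun β => (2*(a^2-1)) * (a - Real.cos β)⁻¹) volume 0 π := by
    apply Continuous.intervalIntegrable
    exact continuous_const.mul ((continuous_const.sub Real.continuous_cos).inv₀
      (fun x => (hden x).ne'))
  rw [intervalIntegral.integral_add hint1 hint2]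
  rw [intervalIntegral.integral_const_mul, intA ha]
  have h1 : ∫ β in (0:ℝ)..π, (-2*a - 2*Real.cos β) = -2*a*π := by
    have : (fun β => -2*a - 2*Real.cos β) = (fun β => -2*a + (-2) * Real.cos β) := by
      funext β; ring
    rw [this, intervalIntegral.integral_add (by
        exact (Continuous.continuousOn (by continuity)).intervalIntegrable) (by
        exact (Continuous.continuousOn (by continuity)).intervalIntegrable)]
    simp [integral_cos]
    ring
  rw [h1]
  have hsne : Real.sqrt (a^2-1) ≠ 0 := by positivity
  field_simp
  linear_combination (-1:ℝ) * hss

lemma sqrt_rw {α : ℝ} (h0 : 0 ≤ α) (h1 : α ≤ π) :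
    Real.sqrt ((2 - Real.cos α)^2 - 1)
      = Real.sqrt 2 * Real.sin (α/2) * Real.sqrt (3 - Real.cos α) := by
  have hc : Real.cos α = 1 - 2 * Real.sin (α/2)^2 := by
    have := Real.cos_two_mul (α/2)
    have h2 : 2 * (α/2) = α := by ring
    rw [h2] at this
    have := Real.sin_sq_add_cos_sq (α/2)
    nlinarith
  have hsin : 0 ≤ Real.sin (α/2) :=
    Real.sin_nonneg_of_nonneg_of_le_pi (by linarith) (by linarith [Real.pi_pos])
  have h3 : (0:ℝ) ≤ 3 - Real.cos α := by have := Real.cos_le_one α; linarith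
  have : (2 - Real.cos α)^2 - 1
      = (Real.sqrt 2 * Real.sin (α/2) * Real.sqrt (3 - Real.cos α))^2 := by
    rw [mul_pow, mul_pow, Real.sq_sqrt (by norm_num : (0:ℝ) ≤ 2), Real.sq_sqrt h3]
    nlinarith
  rw [this, Real.sqrt_sq (by positivity)]

noncomputable def tf : ℝ → ℝ := fun α =>
  2 - Real.cos α - Real.sqrt 2 * Real.sin (α/2) * Real.sqrt (3 - Real.cos α)

lemma tf_contDiff : ContDiff ℝ ∞ tf := by
  rw [contDiff_iff_contDiffAt]
  intro x
  have h3 : (3:ℝ) - Real.cos x ≠ 0 := by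
    have := Real.cos_le_one x; intro h; nlinarith
  exact ((contDiff_const.sub Real.contDiff_cos).contDiffAt).sub
    ((contDiff_const.mul (Real.contDiff_sin.comp (contDiff_id.div_const 2))).contDiffAt.mul
      ((Real.contDiffAt_sqrt h3).comp x ((contDiff_const.sub Real.contDiff_cos).contDiffAt)))

lemma hasDerivAt_tf (p : ℝ) :
    HasDerivAt tf (Real.sin p - Real.sqrt 2 * ((Real.cos (p/2) / 2) * Real.sqrt (3 - Real.cos p)
      + Real.sin (p/2) * (Real.sin p / (2 * Real.sqrt (3 - Real.cos p))))) p := by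
  have h3 : (0:ℝ) < 3 - Real.cos p := by have := Real.cos_le_one p; linarith
  have hQ : HasDerivAt (fun α => Real.sqrt (3 - Real.cos α))
      (Real.sin p / (2 * Real.sqrt (3 - Real.cos p))) p := by
    have h1 : HasDerivAt (fun α => 3 - Real.cos α) (Real.sin p) p := by
      simpa using (Real.hasDerivAt_cos p).const_sub 3
    have := (Real.hasDerivAt_sqrt h3.ne').comp p h1
    refine this.congr_deriv ?_
    symm
    field_simp
  have hS : HasDerivAt (fun α => Real.sin (α/2)) (Real.cos (p/2) / 2) p := by
    have := (Real.hasDerivAt_sin (p/2)).comp p ((hasDerivAt_id p).div_const 2)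
    exact this.congr_deriv (by ring)
  have hprod : HasDerivAt (fun α => Real.sin (α/2) * Real.sqrt (3 - Real.cos α))
      ((Real.cos (p/2) / 2) * Real.sqrt (3 - Real.cos p)
        + Real.sin (p/2) * (Real.sin p / (2 * Real.sqrt (3 - Real.cos p)))) p := hS.mul hQ
  have hcos : HasDerivAt (fun α => 2 - Real.cos α) (Real.sin p) p := by
    simpa using (Real.hasDerivAt_cos p).const_sub 2
  have h := hcos.sub (hprod.const_mul (Real.sqrt 2))
  have hfun : tf = fun α => (2 - Real.cos α) - Real.sqrt 2 * (Real.sin (α/2) * Real.sqrt (3 - Real.cos α)) := by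
    funext α; simp [tf]; ring
  rw [hfun]
  exact h

lemma tf_deriv_zero : deriv tf 0 = -1 := by
  have h := hasDerivAt_tf 0
  have h2 : Real.sin 0 - Real.sqrt 2 * ((Real.cos (0/2) / 2) * Real.sqrt (3 - Real.cos 0)
      + Real.sin (0/2) * (Real.sin 0 / (2 * Real.sqrt (3 - Real.cos 0)))) = -1 := by
    have : Real.sqrt 2 * Real.sqrt 2 = 2 := Real.mul_self_sqrt (by norm_num)
    norm_num
    linarith
  rw [← h2]
  exact h.deriv

lemma tf_deriv_pi : deriv tf π = 0 := by
  have h := hasDerivAt_tf π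
  have h2 : Real.sin π - Real.sqrt 2 * ((Real.cos (π/2) / 2) * Real.sqrt (3 - Real.cos π)
      + Real.sin (π/2) * (Real.sin π / (2 * Real.sqrt (3 - Real.cos π)))) = 0 := by
    simp [Real.cos_pi_div_two, Real.sin_pi, Real.sin_pi_div_two, Real.cos_pi]
  rw [← h2]
  exact h.deriv

noncomputable def phi0 (r : ℕ) : ℝ → ℝ := fun α =>
  (Real.cos (r*α) - 1) * (π / Real.sqrt ((2 - Real.cos α)^2 - 1))

lemma cos_lt_one' {x : ℝ} (hx : x ∈ Ioc (0:ℝ) π) : Real.cos x < 1 := by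
  have := Real.strictAntiOn_cos (left_mem_Icc.mpr Real.pi_pos.le) ⟨hx.1.le, hx.2⟩ hx.1
  simpa using this

lemma phi0_bound (r : ℕ) {x : ℝ} (hx : x ∈ Ioc (0:ℝ) π) :
    |phi0 r x| ≤ (r:ℝ)^2 * π^3 := by
  have hx0 : 0 < x := hx.1
  have hxπ : x ≤ π := hx.2
  have hs : Real.sin (x/2) ≥ x/π := by
    have h := Real.mul_le_sin (x := x/2) (by linarith) (by linarith)
    have hπ : 0 < π := Real.pi_pos
    calc x/π = 2/π * (x/2) := by field_simp
    _ ≤ Real.sin (x/2) := h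
  have hπ : 0 < π := Real.pi_pos
  have hden : Real.sqrt ((2 - Real.cos x)^2 - 1) ≥ 2 * (x/π) := by
    rw [sqrt_rw hx0.le hxπ]
    have h2 : Real.sqrt 2 ≤ Real.sqrt (3 - Real.cos x) := by
      apply Real.sqrt_le_sqrt
      have := Real.cos_le_one x; linarith
    have hs2 : (Real.sqrt 2) * (Real.sqrt 2) = 2 := Real.mul_self_sqrt (by norm_num)
    have h20 : (0:ℝ) < Real.sqrt 2 := by positivity
    have e1 : 2 * (x/π) = Real.sqrt 2 * (x/π) * Real.sqrt 2 := by
      linear_combination (-(x/π)) * hs2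
    rw [ge_iff_le, e1]
    have hsin0 : 0 ≤ Real.sin (x/2) := by
      apply Real.sin_nonneg_of_nonneg_of_le_pi <;> linarith
    gcongr <;> first | positivity | exact hs | linarith [hs]
  have hnum : |Real.cos (r*x) - 1| ≤ (r*x)^2 / 2 := by
    have h1 : Real.cos (r*x) = 1 - 2 * Real.sin (r*x/2)^2 := by
      have := Real.cos_two_mul (r*x/2)
      have h2 : 2 * ((r:ℝ)*x/2) = r*x := by ring
      rw [h2] at this
      have := Real.sin_sq_add_cos_sq ((r:ℝ)*x/2)
      nlinarith
    have h3 : Real.sin ((r:ℝ)*x/2)^2 ≤ ((r:ℝ)*x/2)^2 := Real.sin_sq_le_sq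
    rw [h1, abs_of_nonpos (by nlinarith [Real.sin_sq_le_sq (x := (r:ℝ)*x/2)])]
    nlinarith
  have hdpos : 0 < 2 * (x/π) := by positivity
  have : |phi0 r x| ≤ ((r*x)^2/2) * (π / (2 * (x/π))) := by
    unfold phi0
    rw [abs_mul]
    apply mul_le_mul hnum _ (abs_nonneg _) (by positivity)
    rw [abs_of_nonneg (by positivity)]
    exact div_le_div_of_nonneg_left hπ.le hdpos hden
  calc |phi0 r x| ≤ ((r*x)^2/2) * (π / (2 * (x/π))) := this
  _ = (r:ℝ)^2 * x * π^2 / 4 := by field_simp; ring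
  _ ≤ (r:ℝ)^2 * π^3 := by
    have h4 : (r:ℝ)^2*π^2*x ≤ (r:ℝ)^2*π^2*(4*π) :=
      mul_le_mul_of_nonneg_left (by linarith) (by positivity)
    nlinarith

lemma phi0_integrable (r : ℕ) : IntervalIntegrable (phi0 r) volume 0 π := by
  rw [intervalIntegrable_iff]
  have hmeas : AEStronglyMeasurable (phi0 r) (volume.restrict (Ι (0:ℝ) π)) := by
    apply Measurable.aestronglyMeasurable
    apply Measurable.mul
    · exact ((Real.continuous_cos.comp (continuous_const.mul continuous_id)).sub
        continuous_const).measurable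
    · exact Measurable.div measurable_const
        (Real.continuous_sqrt.comp (by continuity)).measurable
  haveI : IsFiniteMeasure (volume.restrict (Ι (0:ℝ) π)) := by
    constructor
    rw [Measure.restrict_apply_univ]
    simp only [Set.uIoc]
    exact measure_Ioc_lt_top
  apply MeasureTheory.Integrable.mono' (g := fun _ => (r:ℝ)^2 * π^3)
    (integrable_const _) hmeas
  rw [ae_restrict_iff' measurableSet_uIoc]
  apply Filter.Eventually.of_forall
  intro x hx
  rw [Real.norm_eq_abs]
  refine phi0_bound r ?_
  rwa [uIoc_of_le Real.pi_pos.le] at hx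

lemma green_diff (r : ℕ) :
    latticeGreen r 0 - latticeGreen r 2
      = (∫ α in (0:ℝ)..π, tf α * Real.cos (r*α)) / π := by
  have hπ : (0:ℝ) < π := Real.pi_pos
  have htfcont : Continuous tf := tf_contDiff.continuous
  unfold latticeGreen
  simp only [Int.cast_zero, Int.cast_two, Int.cast_natCast, zero_mul, Real.cos_zero, mul_one]
  have hX0 : (∫ x in (0:ℝ)..π, ∫ β in (0:ℝ)..π,
      (Real.cos ((r:ℝ)*x) - 1) / (2 - Real.cos x - Real.cos β))
      = ∫ x in (0:ℝ)..π, phi0 r x := by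
    apply intervalIntegral.integral_congr_ae
    apply Filter.Eventually.of_forall
    intro x hx
    rw [uIoc_of_le hπ.le] at hx
    have ha : 1 < 2 - Real.cos x := by have := cos_lt_one' hx; linarith
    have : (∫ β in (0:ℝ)..π, (Real.cos ((r:ℝ)*x) - 1) / (2 - Real.cos x - Real.cos β))
        = ∫ β in (0:ℝ)..π, (Real.cos ((r:ℝ)*x) - 1) * (2 - Real.cos x - Real.cos β)⁻¹ := by
      apply intervalIntegral.integral_congr
      intro β _
      simp only [div_eq_mul_inv]
    rw [this, intervalIntegral.integral_const_mul, intA ha]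
    rfl
  have hX2 : (∫ x in (0:ℝ)..π, ∫ β in (0:ℝ)..π,
      (Real.cos ((r:ℝ)*x) * Real.cos (2*β) - 1) / (2 - Real.cos x - Real.cos β))
      = ∫ x in (0:ℝ)..π, (phi0 r x - 2*π*(tf x * Real.cos ((r:ℝ)*x))) := by
    apply intervalIntegral.integral_congr_ae
    apply Filter.Eventually.of_forall
    intro x hx
    rw [uIoc_of_le hπ.le] at hx
    have hc1 : Real.cos x < 1 := cos_lt_one' hx
    have ha : 1 < 2 - Real.cos x := by linarith
    have hden : ∀ β : ℝ, 2 - Real.cos x - Real.cos β ≠ 0 := fun β => by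
      have := Real.cos_le_one β; intro h; nlinarith
    have hsplit : ∀ β : ℝ, (Real.cos ((r:ℝ)*x) * Real.cos (2*β) - 1) / (2 - Real.cos x - Real.cos β)
        = (Real.cos ((r:ℝ)*x) - 1) * (2 - Real.cos x - Real.cos β)⁻¹
          + Real.cos ((r:ℝ)*x) * ((Real.cos (2*β) - 1) / (2 - Real.cos x - Real.cos β)) := by
      intro β
      have h := hden β
      field_simp
      ring
    rw [intervalIntegral.integral_congr (fun β _ => hsplit β)]
    have hint1 : IntervalIntegrable
        (fun β => (Real.cos ((r:ℝ)*x) - 1) * (2 - Real.cos x - Real.cos β)⁻¹) volume 0 π := by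
      apply Continuous.intervalIntegrable
      exact continuous_const.mul ((continuous_const.sub Real.continuous_cos).inv₀ hden)
    have hint2 : IntervalIntegrable
        (fun β => Real.cos ((r:ℝ)*x) * ((Real.cos (2*β) - 1) / (2 - Real.cos x - Real.cos β)))
        volume 0 π := by
      apply Continuous.intervalIntegrable
      exact continuous_const.mul (((Real.continuous_cos.comp (continuous_const.mul
        continuous_id)).sub continuous_const).div
        (continuous_const.sub Real.continuous_cos) hden)
    rw [intervalIntegral.integral_add hint1 hint2,
      intervalIntegral.integral_const_mul, intervalIntegral.integral_const_mul,
      intA ha, intB ha]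
    have htf : tf x = (2 - Real.cos x) - Real.sqrt ((2 - Real.cos x)^2 - 1) := by
      rw [sqrt_rw hx.1.le hx.2]; rfl
    unfold phi0
    rw [htf]
    ring
  rw [hX0, hX2]
  have hcos_int : IntervalIntegrable (fun x => 2*π*(tf x * Real.cos ((r:ℝ)*x))) volume 0 π := by
    apply Continuous.intervalIntegrable
    exact continuous_const.mul (htfcont.mul (Real.continuous_cos.comp
      (continuous_const.mul continuous_id)))
  rw [intervalIntegral.integral_sub (phi0_integrable r) hcos_int,
    intervalIntegral.integral_const_mul]
  field_simp
  ring


lemma ibp (r : ℕ) (hr : 1 ≤ r) :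
    ∫ α in (0:ℝ)..π, tf α * Real.cos (r*α)
      = 1/(r:ℝ)^2 + (1/(r:ℝ)^3) * ∫ α in (0:ℝ)..π,
          deriv (deriv (deriv tf)) α * Real.sin (r*α) := by
  have hr0 : ((r:ℝ)) ≠ 0 := by positivity
  have hd1C : ContDiff ℝ ∞ (deriv tf) := (contDiff_infty_iff_deriv.mp tf_contDiff).2
  have hd2C : ContDiff ℝ ∞ (deriv (deriv tf)) := (contDiff_infty_iff_deriv.mp hd1C).2
  have hd3cont : Continuous (deriv (deriv (deriv tf))) :=
    (contDiff_infty_iff_deriv.mp hd2C).2.continuous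
  have hu1 : ∀ x ∈ uIcc (0:ℝ) π, HasDerivAt tf (deriv tf x) x :=
    fun x _ => (tf_contDiff.differentiable (by simp) x).hasDerivAt
  have hu2 : ∀ x ∈ uIcc (0:ℝ) π, HasDerivAt (deriv tf) (deriv (deriv tf) x) x :=
    fun x _ => (hd1C.differentiable (by simp) x).hasDerivAt
  have hu3 : ∀ x ∈ uIcc (0:ℝ) π, HasDerivAt (deriv (deriv tf)) (deriv (deriv (deriv tf)) x) x :=
    fun x _ => (hd2C.differentiable (by simp) x).hasDerivAt
  have hv1 : ∀ x ∈ uIcc (0:ℝ) π,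
      HasDerivAt (fun y => Real.sin ((r:ℝ)*y)/(r:ℝ)) (Real.cos ((r:ℝ)*x)) x := by
    intro x _
    have h := ((Real.hasDerivAt_sin ((r:ℝ)*x)).comp x
      ((hasDerivAt_id x).const_mul (r:ℝ))).div_const (r:ℝ)
    refine h.congr_deriv ?_
    symm
    field_simp
  have hv2 : ∀ x ∈ uIcc (0:ℝ) π,
      HasDerivAt (fun y => -Real.cos ((r:ℝ)*y)/(r:ℝ)) (Real.sin ((r:ℝ)*x)) x := by
    intro x _
    have h := (((Real.hasDerivAt_cos ((r:ℝ)*x)).comp x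
      ((hasDerivAt_id x).const_mul (r:ℝ))).neg.div_const (r:ℝ))
    refine h.congr_deriv ?_
    symm
    field_simp
  have hcos_int : IntervalIntegrable (fun x => Real.cos ((r:ℝ)*x)) volume 0 π :=
    (Real.continuous_cos.comp (continuous_const.mul continuous_id)).intervalIntegrable _ _
  have hsin_int : IntervalIntegrable (fun x => Real.sin ((r:ℝ)*x)) volume 0 π :=
    (Real.continuous_sin.comp (continuous_const.mul continuous_id)).intervalIntegrable _ _
  have hd1_int : IntervalIntegrable (deriv tf) volume 0 π :=
    hd1C.continuous.intervalIntegrable _ _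
  have hd2_int : IntervalIntegrable (deriv (deriv tf)) volume 0 π :=
    hd2C.continuous.intervalIntegrable _ _
  have hd3_int : IntervalIntegrable (deriv (deriv (deriv tf))) volume 0 π :=
    hd3cont.intervalIntegrable _ _
  have hsinpi : Real.sin ((r:ℝ)*π) = 0 := Real.sin_nat_mul_pi r
  have step1 := intervalIntegral.integral_mul_deriv_eq_deriv_mul hu1 hv1 hd1_int hcos_int
  have step2 := intervalIntegral.integral_mul_deriv_eq_deriv_mul hu2 hv2 hd2_int hsin_int
  have step3 := intervalIntegral.integral_mul_deriv_eq_deriv_mul hu3 hv1 hd3_int hcos_int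
  rw [step1]
  have e1 : ∀ (f : ℝ → ℝ), (∫ x in (0:ℝ)..π, f x * (Real.sin ((r:ℝ)*x)/(r:ℝ)))
      = (∫ x in (0:ℝ)..π, f x * Real.sin ((r:ℝ)*x))/(r:ℝ) := by
    intro f
    rw [← intervalIntegral.integral_div]
    apply intervalIntegral.integral_congr
    intro x _
    ring
  have e2 : ∀ (f : ℝ → ℝ), (∫ x in (0:ℝ)..π, f x * (-Real.cos ((r:ℝ)*x)/(r:ℝ)))
      = -((∫ x in (0:ℝ)..π, f x * Real.cos ((r:ℝ)*x))/(r:ℝ)) := by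
    intro f
    rw [← intervalIntegral.integral_div, ← intervalIntegral.integral_neg]
    apply intervalIntegral.integral_congr
    intro x _
    ring
  rw [e1 (deriv tf), step2, e2 (deriv (deriv tf)), step3, e1 (deriv (deriv (deriv tf)))]
  rw [tf_deriv_zero, tf_deriv_pi, hsinpi]
  simp only [mul_zero, Real.cos_zero, Real.sin_zero, zero_div, mul_zero, zero_mul]
  field_simp
  ring

theorem stmt_18 :
    Filter.Tendsto
      (fun r : ℕ => (r : ℝ) ^ 2 * (latticeGreen r 0 - latticeGreen r 2))
      Filter.atTop (nhds (1 / Real.pi)) := by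
  have hπ : (0:ℝ) < π := Real.pi_pos
  set d3 : ℝ → ℝ := deriv (deriv (deriv tf)) with hd3
  set J : ℕ → ℝ := fun r => ∫ α in (0:ℝ)..π, d3 α * Real.sin (r*α) with hJdef
  have hd1C : ContDiff ℝ ∞ (deriv tf) := (contDiff_infty_iff_deriv.mp tf_contDiff).2
  have hd2C : ContDiff ℝ ∞ (deriv (deriv tf)) := (contDiff_infty_iff_deriv.mp hd1C).2
  have hd3cont : Continuous d3 := (contDiff_infty_iff_deriv.mp hd2C).2.continuous
  obtain ⟨M, hM⟩ := (isCompact_Icc (a := (0:ℝ)) (b := π)).exists_bound_of_continuousOn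
    hd3cont.continuousOn
  have hM0 : 0 ≤ M := le_trans (norm_nonneg _) (hM 0 ⟨le_rfl, hπ.le⟩)
  have hJ : ∀ r : ℕ, |J r| ≤ M * π := by
    intro r
    have hb : ∀ x ∈ Ι (0:ℝ) π, ‖d3 x * Real.sin (r*x)‖ ≤ M := by
      intro x hx
      rw [uIoc_of_le hπ.le] at hx
      have h1 : ‖d3 x‖ ≤ M := hM x ⟨hx.1.le, hx.2⟩
      have h2 : ‖Real.sin ((r:ℝ)*x)‖ ≤ 1 := by
        rw [Real.norm_eq_abs]
        exact abs_le.mpr ⟨Real.neg_one_le_sin _, Real.sin_le_one _⟩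
      calc ‖d3 x * Real.sin ((r:ℝ)*x)‖ = ‖d3 x‖ * ‖Real.sin ((r:ℝ)*x)‖ := norm_mul _ _
        _ ≤ M * 1 := mul_le_mul h1 h2 (norm_nonneg _) hM0
        _ = M := mul_one M
    have := intervalIntegral.norm_integral_le_of_norm_le_const hb
    rw [Real.norm_eq_abs] at this
    calc |J r| ≤ M * |π - 0| := this
    _ = M * π := by rw [sub_zero, abs_of_pos hπ]
  have hlim : Tendsto (fun r : ℕ => J r/(π * r)) atTop (nhds 0) := by
    apply squeeze_zero_norm (a := fun r : ℕ => M / (r:ℝ))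
    · intro r
      rcases Nat.eq_zero_or_pos r with h0 | hpos
      · subst h0; simp
      · have hr0 : (0:ℝ) < r := by exact_mod_cast hpos
        rw [Real.norm_eq_abs, abs_div, abs_of_pos (by positivity : (0:ℝ) < π * r)]
        rw [div_le_div_iff₀ (by positivity) hr0]
        calc |J r| * r ≤ (M * π) * r := by
              apply mul_le_mul_of_nonneg_right (hJ r) hr0.le
        _ = M * (π * r) := by ring
    · exact tendsto_const_div_atTop_nhds_zero_nat M
  have key : ∀ r : ℕ, 1 ≤ r →
      (r:ℝ)^2 * (latticeGreen r 0 - latticeGreen r 2) = 1/π + J r/(π * r) := by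
    intro r hr
    have hr0 : ((r:ℝ)) ≠ 0 := by positivity
    rw [green_diff r, ibp r hr]
    field_simp
    ring
  have hconv : Tendsto (fun r : ℕ => 1/π + J r/(π * r)) atTop (nhds (1/π)) := by
    have := tendsto_const_nhds (x := 1/π) (f := atTop (α := ℕ)) |>.add hlim
    simpa using this
  apply hconv.congr'
  filter_upwards [eventually_ge_atTop 1] with r hr
  exact (key r hr).symm
end

section
/- Let b : ℕ → ℝ and r > 0 with b_n = (−1)^n (α)_n / (r^{α+n} n!) for a real α. Then det_{0≤i,j≤k−1}[ b_{i+j} · binomial(i+j, j) ] = r^{−k(α+k−1)} · ∏_{i=0}^{k−1} (α)_i / i!. -/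
open Finset

noncomputable def P (n : ℕ) (x : ℝ) : ℝ := (ascPochhammer ℝ n).eval x

lemma P_zero (x : ℝ) : P 0 x = 1 := by simp [P]

lemma P_succ (n : ℕ) (x : ℝ) : P (n+1) x = P n x * (x + n) := by
  simp [P, ascPochhammer_succ_eval]

lemma P_succ_left (n : ℕ) (x : ℝ) : P (n+1) x = x * P n (x+1) := by
  simp [P, ascPochhammer_succ_left, Polynomial.eval_comp]

lemma P_mul (n m : ℕ) (x : ℝ) : P n x * P m (x + n) = P (n + m) x := by
  have := ascPochhammer_mul (S := ℝ) n m
  have h := congrArg (Polynomial.eval x) this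
  simpa [P, Polynomial.eval_comp] using h

-- descFactorial recurrence over ℝ
lemma desc_step (j m : ℕ) :
    (((j+1).descFactorial m : ℕ) : ℝ) =
      (j.descFactorial m : ℝ) + m * (j.descFactorial (m-1) : ℝ) := by
  cases m with
  | zero => simp
  | succ m =>
    rcases le_or_gt m j with h | h
    · rw [Nat.succ_descFactorial_succ, Nat.descFactorial_succ]
      push_cast [Nat.cast_sub h]
      ring
    · have h1 : j.descFactorial (m+1) = 0 := Nat.descFactorial_eq_zero_iff_lt.2 (by omega)
      have h2 : j.descFactorial m = 0 := Nat.descFactorial_eq_zero_iff_lt.2 (by omega)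
      rw [Nat.succ_descFactorial_succ, h1, h2]
      simp [Nat.descFactorial_eq_zero_iff_lt, h]

lemma key_s19 (j : ℕ) : ∀ (i : ℕ) (α : ℝ),
    P i (α + j) = ∑ m ∈ range (i+1),
      (i.choose m : ℝ) * P (i-m) (α + m) * (j.descFactorial m : ℝ) := by
  induction j with
  | zero =>
    intro i α
    rw [Finset.sum_eq_single 0]
    · simp
    · rintro (_|m) hm hne
      · exact absurd rfl hne
      · simp [Nat.zero_descFactorial_succ]
    · simp
  | succ j ih =>
    intro i α
    have hsplit : ∑ m ∈ range (i+1),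
        (i.choose m : ℝ) * P (i-m) (α + m) * ((j+1).descFactorial m : ℝ)
        = (∑ m ∈ range (i+1), (i.choose m : ℝ) * P (i-m) (α + m) * (j.descFactorial m : ℝ))
          + ∑ m ∈ range (i+1),
              (i.choose m : ℝ) * P (i-m) (α + m) * (m * (j.descFactorial (m-1) : ℝ)) := by
      rw [← Finset.sum_add_distrib]
      refine Finset.sum_congr rfl fun m hm => ?_
      rw [desc_step]; ring
    rw [hsplit, ← ih i α]
    cases i with
    | zero => simp [P_zero]
    | succ n =>
      have hS : ∑ m ∈ range (n+2),
          ((n+1).choose m : ℝ) * P (n+1-m) (α + m) * (m * (j.descFactorial (m-1) : ℝ))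
          = ((n:ℝ)+1) * P n ((α+1) + j) := by
        rw [Finset.sum_range_succ']
        simp only [Nat.cast_zero, zero_mul, mul_zero, add_zero]
        rw [ih n (α+1), Finset.mul_sum]
        refine Finset.sum_congr rfl fun m hm => ?_
        have hc : (((n+1).choose (m+1) : ℕ) : ℝ) * ((m:ℝ)+1) = ((n:ℝ)+1) * (n.choose m : ℝ) := by
          exact_mod_cast (Nat.add_one_mul_choose_eq n m).symm
        have harg : α + (((m+1:ℕ)):ℝ) = (α+1) + m := by push_cast; ring
        rw [harg]
        have : (m+1 : ℕ) - 1 = m := rfl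
        rw [this]
        push_cast
        linear_combination (P (n-m) ((α+1)+(m:ℝ)) * (j.descFactorial m : ℝ)) * hc
      rw [hS]
      have h1 : α + (((j+1:ℕ)):ℝ) = (α + j) + 1 := by push_cast; ring
      have h2 : (α+1) + (j:ℝ) = (α + j) + 1 := by ring
      rw [h1, h2, P_succ, P_succ_left]
      ring

lemma hankel (k : ℕ) (α : ℝ) :
    Matrix.det (Matrix.of fun i j : Fin k => P (i.1 + j.1) α)
      = ∏ i : Fin k, (Nat.factorial i.1 : ℝ) * P i.1 α := by
  set L : Matrix (Fin k) (Fin k) ℝ :=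
    Matrix.of fun i m => (i.1.choose m.1 : ℝ) * P (i.1 - m.1) (α + m.1) with hLdef
  set U : Matrix (Fin k) (Fin k) ℝ :=
    Matrix.of fun m j => (j.1.descFactorial m.1 : ℝ) * P j.1 α with hUdef
  have hLU : (Matrix.of fun i j : Fin k => P (i.1 + j.1) α) = L * U := by
    ext i j
    have hmul : (L * U) i j = ∑ m ∈ range k,
        ((i.1.choose m : ℝ) * P (i.1 - m) (α + m)) * ((j.1.descFactorial m : ℝ) * P j.1 α) := by
      rw [Matrix.mul_apply]
      exact Fin.sum_univ_eq_sum_range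
        (fun m => ((i.1.choose m : ℝ) * P (i.1 - m) (α + m)) *
          ((j.1.descFactorial m : ℝ) * P j.1 α)) k
    have hsub : range (i.1 + 1) ⊆ range k := Finset.range_subset_range.2 i.isLt
    have hzero : ∀ m ∈ range k, m ∉ range (i.1 + 1) →
        ((i.1.choose m : ℝ) * P (i.1 - m) (α + m)) * ((j.1.descFactorial m : ℝ) * P j.1 α) = 0 := by
      intro m _ hm
      have : i.1 < m := by simpa using hm
      rw [Nat.choose_eq_zero_of_lt this]
      simp
    have hPij : P (i.1 + j.1) α = P i.1 (α + (j.1 : ℝ)) * P j.1 α := by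
      rw [mul_comm, P_mul, Nat.add_comm]
    show P (i.1 + j.1) α = (L * U) i j
    rw [hmul, ← Finset.sum_subset hsub hzero, hPij, key_s19 j.1 i.1 α, Finset.sum_mul]
    refine Finset.sum_congr rfl fun m hm => by ring
  have hLtri : L.BlockTriangular OrderDual.toDual := by
    intro i m h
    have : i.1 < m.1 := h
    simp [hLdef, Nat.choose_eq_zero_of_lt this]
  have hUtri : U.BlockTriangular id := by
    intro m j h
    have : j.1 < m.1 := h
    simp [hUdef, Nat.descFactorial_eq_zero_iff_lt.2 this]
  rw [hLU, Matrix.det_mul, Matrix.det_of_lowerTriangular L hLtri,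
    Matrix.det_of_upperTriangular hUtri]
  have hLdiag : ∀ i : Fin k, L i i = 1 := by
    intro i; simp [hLdef, P_zero]
  have hUdiag : ∀ i : Fin k, U i i = (Nat.factorial i.1 : ℝ) * P i.1 α := by
    intro i; simp [hUdef, Nat.descFactorial_self]
  rw [Finset.prod_congr rfl fun i _ => hLdiag i, Finset.prod_congr rfl fun i _ => hUdiag i]
  simp

theorem stmt_19 (k : ℕ) (hk : 0 < k) (α : ℝ) (r : ℝ) (hr : 0 < r) (b : ℕ → ℝ)
    (hb : ∀ n : ℕ, b n =
      (-1) ^ n * (ascPochhammer ℝ n).eval α / (r ^ (α + n) * (Nat.factorial n : ℝ))) :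
    Matrix.det (Matrix.of fun i j : Fin k =>
        b (i.1 + j.1) * (Nat.choose (i.1 + j.1) j.1 : ℝ)) =
      r ^ (-((k : ℝ) * (α + (k : ℝ) - 1))) *
        ∏ i : Fin k, (ascPochhammer ℝ i.1).eval α / (Nat.factorial i.1 : ℝ) := by
  have hrne : r ≠ 0 := ne_of_gt hr
  set q : ℝ := r ^ α with hq
  have hqpos : (0:ℝ) < q := Real.rpow_pos_of_pos hr α
  have hM : (Matrix.of fun i j : Fin k =>
        b (i.1 + j.1) * (Nat.choose (i.1 + j.1) j.1 : ℝ))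
      = Matrix.of (fun i j : Fin k =>
          ((-1:ℝ)^i.1 / ((Nat.factorial i.1 : ℝ) * r ^ i.1)) *
          Matrix.of (fun i j : Fin k =>
            ((-1:ℝ)^j.1 / ((Nat.factorial j.1 : ℝ) * q * r ^ j.1)) *
            Matrix.of (fun i j : Fin k => P (i.1 + j.1) α) i j) i j) := by
    ext i j
    simp only [Matrix.of_apply]
    rw [hb]
    have hrpow : r ^ (α + ((i.1 + j.1 : ℕ) : ℝ)) = q * (r ^ i.1 * r ^ j.1) := by
      have h1 : ((i.1 + j.1 : ℕ) : ℝ) = (i.1:ℝ) + (j.1:ℝ) := by push_cast; ring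
      rw [h1, ← add_assoc, Real.rpow_add hr, Real.rpow_add hr,
        Real.rpow_natCast, Real.rpow_natCast, hq, mul_assoc]
    rw [hrpow]
    have hfact : ((Nat.choose (i.1+j.1) j.1 : ℕ) : ℝ) * (Nat.factorial j.1 : ℝ) *
        (Nat.factorial i.1 : ℝ) = (Nat.factorial (i.1+j.1) : ℝ) := by
      exact_mod_cast congrArg (Nat.cast (R := ℝ))
        (by simpa using Nat.choose_mul_factorial_mul_factorial (Nat.le_add_left j.1 i.1))
    have hfi : (Nat.factorial i.1 : ℝ) ≠ 0 := Nat.cast_ne_zero.2 (Nat.factorial_ne_zero _)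
    have hfj : (Nat.factorial j.1 : ℝ) ≠ 0 := Nat.cast_ne_zero.2 (Nat.factorial_ne_zero _)
    have hfij : (Nat.factorial (i.1+j.1) : ℝ) ≠ 0 := Nat.cast_ne_zero.2 (Nat.factorial_ne_zero _)
    have hri : r ^ i.1 ≠ 0 := pow_ne_zero _ hrne
    have hrj : r ^ j.1 ≠ 0 := pow_ne_zero _ hrne
    have hP : P (i.1 + j.1) α = (ascPochhammer ℝ (i.1+j.1)).eval α := rfl
    rw [← hP, pow_add]
    field_simp
    linear_combination (P (i.1+j.1) α) * hfact
  rw [hM, Matrix.det_mul_column, Matrix.det_mul_row, hankel]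
  -- scalar computation
  rw [← Finset.prod_mul_distrib, ← Finset.prod_mul_distrib]
  have hterm : ∀ i : Fin k,
      ((-1:ℝ)^i.1 / ((Nat.factorial i.1:ℝ) * r ^ i.1)) *
        (((-1:ℝ)^i.1 / ((Nat.factorial i.1:ℝ) * q * r ^ i.1)) *
          ((Nat.factorial i.1 : ℝ) * P i.1 α))
      = (P i.1 α / (Nat.factorial i.1:ℝ)) * (q * (r^2) ^ i.1)⁻¹ := by
    intro i
    have hfi : (Nat.factorial i.1 : ℝ) ≠ 0 := Nat.cast_ne_zero.2 (Nat.factorial_ne_zero _)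
    have hri : r ^ i.1 ≠ 0 := pow_ne_zero _ hrne
    have hq2 : (r^2) ^ i.1 = r ^ i.1 * r ^ i.1 := by rw [← pow_mul, two_mul, pow_add]
    rw [hq2]
    field_simp
    have hsq : ((-1:ℝ)^i.1) * ((-1:ℝ)^i.1) = 1 := by
      rw [← pow_add]
      exact Even.neg_one_pow ⟨i.1, rfl⟩
    linear_combination (P i.1 α) * hsq
  rw [Finset.prod_congr rfl fun i _ => hterm i, Finset.prod_mul_distrib]
  have hinv : (∏ i : Fin k, (q * (r^2) ^ i.1)⁻¹) = (q ^ k * r ^ (k * (k-1)))⁻¹ := by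
    rw [Finset.prod_inv_distrib]
    congr 1
    rw [Finset.prod_mul_distrib, Finset.prod_const, Finset.card_univ, Fintype.card_fin]
    congr 1
    rw [Finset.prod_pow_eq_pow_sum]
    rw [← pow_mul]
    congr 1
    have := Finset.sum_range_id_mul_two k
    have hsum : ∑ i : Fin k, i.1 = ∑ i ∈ range k, i := Fin.sum_univ_eq_sum_range (fun i => i) k
    omega
  rw [hinv]
  have hpow : (q ^ k * r ^ (k * (k-1)))⁻¹ = r ^ (-((k : ℝ) * (α + (k : ℝ) - 1))) := by
    rw [hq, ← Real.rpow_natCast (r ^ α) k, ← Real.rpow_mul hr.le,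
      ← Real.rpow_natCast r (k * (k-1)), ← Real.rpow_add hr, ← Real.rpow_neg hr.le]
    congr 1
    have h1 : ((k * (k-1) : ℕ) : ℝ) = (k:ℝ) * ((k:ℝ) - 1) := by
      push_cast [Nat.cast_sub (Nat.one_le_iff_ne_zero.2 hk.ne')]
      ring
    rw [h1]; ring
  rw [hpow]
  have : ∀ i : Fin k, P i.1 α / (Nat.factorial i.1 : ℝ) =
      (ascPochhammer ℝ i.1).eval α / (Nat.factorial i.1 : ℝ) := fun i => rfl
  rw [Finset.prod_congr rfl fun i _ => this i]
  ring
end
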